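/- arXiv:2110.08677 — 9 statements merged into one kernel-verified Lean document; each statement's English description precedes it below -/
import Mathlib

section
/- Fix an integer D ≥ 2. There is a constant C = C(D) > 0 such that the following holds. Let d, n ∈ ℕ with 2 ≤ D ≤ d ≤ n, and let m ≥ C·n^D/d^{D−1}. Let g_1, …, g_m be homogeneous degree-D polynomials in variables x_1, …, x_n whose coefficients, together with scalars b_1, …, b_m, are sampled independently from (possibly different) n^{2d}-nice distributions on ℚ. Then with probability at least 1 − n^{−d}, the generated ideal of {g_1 − b_1, …, g_m − b_m} at degree d is complete, i.e., every homogeneous polynomial of degree d in x_1, …, x_n can be written as Σ_{i=1}^m a_i·(g_i − b_i) with each a_i a polynomial of degree at most d − D. -/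
open MeasureTheory
open scoped ENNReal

/-- A probability distribution `ν` on `ℚ` is `B`-nice if it is supported on rationals
expressible as `p/q` with `|p|, |q| ≤ 2^B`, and every atom has probability at most `B⁻¹⁰⁰`. -/
def IsNiceDistribution (B : ℕ) (ν : Measure ℚ) : Prop :=
  IsProbabilityMeasure ν ∧
  ν {r : ℚ | ∃ p q : ℤ, q ≠ 0 ∧ r = (p : ℚ) / (q : ℚ) ∧ p.natAbs ≤ 2 ^ B ∧ q.natAbs ≤ 2 ^ B} = 1 ∧
  ∀ r : ℚ, ν {r} ≤ 1 / (B : ℝ≥0∞) ^ 100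

/-- The monomial `x^s` corresponding to a multiset (of size `D`) of variables. -/
noncomputable def symMonomial {n D : ℕ} (s : Sym (Fin n) D) : MvPolynomial (Fin n) ℚ :=
  (Multiset.map MvPolynomial.X s.1).prod

open MvPolynomial

/-!
Completeness at degree `d` follows once a square matrix `M(ω)` is invertible. Its rows are indexed
by the monomials of degree `d` and `d - D`, and its columns are the coefficient vectors of products
`x^c (gᵢ - bᵢ)` with `deg x^c = d - D`, one for each row. The entries of `M(ω)` are linear in the
random coefficients `ω`, so `det M(ω)` is a polynomial in them of degree at most the number of
rows, which is below `n^(3d)`; by Schwartz–Zippel it vanishes with probability at most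
`n^(3d) · n^(-200d)`.

It is a nonzero polynomial because `M = 1` at a suitable point. Split the variables into `d / D`
blocks of size about `nD / d`. By pigeonhole every monomial `x^α` of degree `d` is divisible by a
monomial `x^s` of degree `D` inside a single block, and there are at most `(4Dn)^D / d^(D-1)` such
`x^s`. Let one generator be `x^s` for each of them and one more be `1`; then the column of `x^α`
can be taken to be `x^(α - s) · x^s` and that of a monomial `x^γ` of degree `d - D` to be `x^γ · 1`.
-/
section SchwartzZippel

variable {K : Type*} [Field K] [MeasurableSpace K] [MeasurableSingletonClass K] {ε : ℝ≥0∞}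

lemma measure_finset_le_card_mul {α : Type*} [MeasurableSpace α] [MeasurableSingletonClass α]
    {μ : Measure α} (hμ : ∀ x, μ {x} ≤ ε) (t : Finset α) : μ t ≤ t.card * ε := by
  calc μ t = ∑ x ∈ t, μ {x} := sum_measure_singleton.symm
    _ ≤ ∑ _x ∈ t, ε := Finset.sum_le_sum fun x _ ↦ hμ x
    _ = t.card * ε := by rw [Finset.sum_const, nsmul_eq_mul]

lemma Polynomial.measure_eval_eq_zero_le {μ : Measure K} (hμ : ∀ x, μ {x} ≤ ε)
    {p : Polynomial K} (hp : p ≠ 0) : μ {x | p.eval x = 0} ≤ p.natDegree * ε := by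
  classical
  have hroots : {x | p.eval x = 0} ⊆ p.roots.toFinset := fun x hx ↦ by
    simpa [Polynomial.mem_roots hp] using hx
  have hcard : (p.roots.toFinset.card : ℝ≥0∞) ≤ p.natDegree := by
    exact_mod_cast (Multiset.toFinset_card_le _).trans (Polynomial.card_roots' p)
  calc μ {x | p.eval x = 0} ≤ p.roots.toFinset.card * ε :=
        (measure_mono hroots).trans (measure_finset_le_card_mul hμ _)
    _ ≤ p.natDegree * ε := by gcongr

/-- For fixed `y`, either the leading coefficient of `p` vanishes at `y`, or `x ↦ p(x, y)` is a
nonzero polynomial with at most `natDegree p` roots. -/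
lemma measure_prod_eval_map_eval_eq_zero_le [Countable K] {N : ℕ} {μ : Measure K}
    [IsProbabilityMeasure μ] (hμ : ∀ x, μ {x} ≤ ε) (ν : Measure (Fin N → K))
    [IsProbabilityMeasure ν] (p : Polynomial (MvPolynomial (Fin N) K)) :
    (μ.prod ν) {z | (p.map (eval z.2)).eval z.1 = 0}
      ≤ ν {y | eval y p.leadingCoeff = 0} + p.natDegree * ε := by
  have hslice : ∀ y, μ {x | (p.map (eval y)).eval x = 0}
      ≤ {y | eval y p.leadingCoeff = 0}.indicator 1 y + p.natDegree * ε := by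
    intro y
    by_cases hy : eval y p.leadingCoeff = 0
    · simp only [Set.indicator_of_mem (show y ∈ {y | eval y p.leadingCoeff = 0} from hy),
        Pi.one_apply]
      exact prob_le_one.trans le_self_add
    · have hne : p.map (eval y) ≠ 0 := fun h ↦ hy (by
        simpa [Polynomial.coeff_map] using congr_arg (·.coeff p.natDegree) h)
      calc μ {x | (p.map (eval y)).eval x = 0} ≤ (p.map (eval y)).natDegree * ε :=
            Polynomial.measure_eval_eq_zero_le hμ hne
        _ ≤ p.natDegree * ε := by gcongr; exact Polynomial.natDegree_map_le
        _ ≤ _ := le_add_self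
  rw [Measure.prod_apply_symm (Set.to_countable _).measurableSet]
  calc ∫⁻ y, μ ((fun x ↦ (x, y)) ⁻¹' {z | (p.map (eval z.2)).eval z.1 = 0}) ∂ν
      ≤ ∫⁻ y, ({y | eval y p.leadingCoeff = 0}.indicator 1 y + p.natDegree * ε) ∂ν :=
        lintegral_mono hslice
    _ = ν {y | eval y p.leadingCoeff = 0} + p.natDegree * ε := by
        rw [lintegral_add_right _ measurable_const, lintegral_indicator_one
          (Set.to_countable _).measurableSet, lintegral_const, measure_univ, mul_one]

lemma MvPolynomial.measure_pi_fin_eval_eq_zero_le [Countable K] (N : ℕ) (μ : Fin N → Measure K)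
    [∀ i, IsProbabilityMeasure (μ i)] (hμ : ∀ i x, μ i {x} ≤ ε)
    {Q : MvPolynomial (Fin N) K} (hQ : Q ≠ 0) :
    Measure.pi μ {x | eval x Q = 0} ≤ Q.totalDegree * ε := by
  induction N with
  | zero =>
    obtain ⟨c, rfl⟩ := C_surjective (Fin 0) Q
    have hc : c ≠ 0 := by simpa using hQ
    simp [hc]
  | succ N ih =>
    set p := finSuccEquiv K N Q
    have hp : p ≠ 0 := by simpa [p] using hQ
    have hlead : p.leadingCoeff ≠ 0 := Polynomial.leadingCoeff_ne_zero.mpr hp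
    have hpre : {x : Fin (N + 1) → K | eval x Q = 0} = MeasurableEquiv.piFinSuccAbove
        (fun _ ↦ K) 0 ⁻¹' {z | (p.map (eval z.2)).eval z.1 = 0} := by
      ext x
      conv_lhs => rw [Set.mem_ofPred_eq, ← Fin.cons_self_tail x, eval_eq_eval_mv_eval']
      simp [MeasurableEquiv.piFinSuccAbove, Fin.insertNthEquiv, Fin.removeNth_zero, p]
    rw [hpre, (measurePreserving_piFinSuccAbove μ 0).measure_preimage
      (Set.to_countable _).measurableSet.nullMeasurableSet]
    calc _ ≤ Measure.pi (fun j ↦ μ (Fin.succAbove 0 j)) {y | eval y p.leadingCoeff = 0}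
          + p.natDegree * ε := measure_prod_eval_map_eval_eq_zero_le (hμ 0) _ p
      _ ≤ p.leadingCoeff.totalDegree * ε + p.natDegree * ε := by
          gcongr; exact ih _ (fun i ↦ hμ _) hlead
      _ ≤ Q.totalDegree * ε := by
          rw [← add_mul]; gcongr
          exact_mod_cast totalDegree_coeff_finSuccEquiv_add_le Q _ hlead

theorem MvPolynomial.measure_pi_eval_eq_zero_le [Countable K] {ι : Type*} [Fintype ι]
    (μ : ι → Measure K) [∀ i, IsProbabilityMeasure (μ i)] (hμ : ∀ i x, μ i {x} ≤ ε)
    {Q : MvPolynomial ι K} (hQ : Q ≠ 0) :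
    Measure.pi μ {x | eval x Q = 0} ≤ Q.totalDegree * ε := by
  let e := (Fintype.equivFin ι).symm
  have hQ' : rename e.symm Q ≠ 0 := (rename_injective _ e.symm.injective).ne_iff.mpr hQ
  have hpre : MeasurableEquiv.piCongrLeft (fun _ ↦ K) e ⁻¹' {x | eval x Q = 0}
      = {x | eval x (rename e.symm Q) = 0} := by
    ext x
    have hx : Equiv.piCongrLeft (fun _ ↦ K) e x = x ∘ e.symm := by
      funext i; simp [Equiv.piCongrLeft_apply]
    simp [eval_rename, MeasurableEquiv.coe_piCongrLeft, hx]
  calc Measure.pi μ {x | eval x Q = 0}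
      = Measure.pi (fun i ↦ μ (e i)) {x | eval x (rename e.symm Q) = 0} := by
        rw [← hpre, (measurePreserving_piCongrLeft μ e).measure_preimage
          (Set.to_countable _).measurableSet.nullMeasurableSet]
    _ ≤ (rename e.symm Q).totalDegree * ε :=
        measure_pi_fin_eval_eq_zero_le _ _ (fun i ↦ hμ _) hQ'
    _ ≤ Q.totalDegree * ε := by gcongr; exact totalDegree_rename_le _ _

end SchwartzZippel

section Determinant

variable {K : Type*} [Field K] {Ω ι : Type*} [Fintype Ω] [Fintype ι] [DecidableEq ι]

lemma MvPolynomial.totalDegree_det_le {σ R : Type*} [CommRing R]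
    (M : Matrix ι ι (MvPolynomial σ R)) {k : ℕ} (hM : ∀ i j, (M i j).totalDegree ≤ k) :
    M.det.totalDegree ≤ Fintype.card ι * k := by
  rw [Matrix.det_apply]
  refine (totalDegree_finsetSum _ _).trans (Finset.sup_le fun π _ ↦ ?_)
  calc (Equiv.Perm.sign π • ∏ i, M (π i) i).totalDegree ≤ (∏ i, M (π i) i).totalDegree := by
        rcases Int.units_eq_one_or (Equiv.Perm.sign π) with h | h <;> simp [h]
    _ ≤ ∑ i, (M (π i) i).totalDegree := totalDegree_finsetProd _ _
    _ ≤ ∑ _i : ι, k := Finset.sum_le_sum fun i _ ↦ hM _ _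
    _ = Fintype.card ι * k := by simp

lemma LinearMap.exists_mvPolynomial_eval_eq (ℓ : (Ω → K) →ₗ[K] K) :
    ∃ p : MvPolynomial Ω K, p.totalDegree ≤ 1 ∧ ∀ ω, eval ω p = ℓ ω := by
  classical
  refine ⟨∑ k, C (ℓ (Pi.single k 1)) * X k, ?_, fun ω ↦ ?_⟩
  · refine (totalDegree_finsetSum _ _).trans (Finset.sup_le fun k _ ↦ ?_)
    exact (totalDegree_mul _ _).trans (by simp)
  · conv_rhs => rw [← Finset.univ_sum_single ω]
    simp only [map_sum, eval_mul, eval_C, eval_X]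
    refine Finset.sum_congr rfl fun k _ ↦ ?_
    rw [mul_comm, ← smul_eq_mul, ← map_smul, ← Pi.single_smul', smul_eq_mul, mul_one]

lemma exists_mvPolynomial_eval_eq_det (A : ι → ι → (Ω → K) →ₗ[K] K) :
    ∃ P : MvPolynomial Ω K, P.totalDegree ≤ Fintype.card ι ∧
      ∀ ω, eval ω P = (Matrix.of fun i j ↦ A i j ω).det := by
  choose p hdeg heval using fun i j ↦ (A i j).exists_mvPolynomial_eval_eq
  refine ⟨(Matrix.of p).det, ?_, fun ω ↦ ?_⟩
  · simpa using totalDegree_det_le (Matrix.of p) (fun i j ↦ hdeg i j)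
  · rw [RingHom.map_det]
    congr 1
    ext i j
    simp [heval]

end Determinant

section Span

variable {K σ ι : Type*} [Field K] [Fintype ι] [DecidableEq ι]

lemma MvPolynomial.mem_span_of_det_coeff_ne_zero (e : ι → σ →₀ ℕ) {Θ : ι → MvPolynomial σ K}
    (hΘ : ∀ j, ↑(Θ j).support ⊆ Set.range e) {f : MvPolynomial σ K}
    (hf : ↑f.support ⊆ Set.range e) (hdet : (Matrix.of fun t j ↦ coeff (e t) (Θ j)).det ≠ 0) :
    f ∈ Submodule.span K (Set.range Θ) := by
  set M := Matrix.of fun t j ↦ coeff (e t) (Θ j)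
  set c := M⁻¹.mulVec fun t ↦ coeff (e t) f
  have hMc : M.mulVec c = fun t ↦ coeff (e t) f := by
    rw [Matrix.mulVec_mulVec, Matrix.mul_nonsing_inv _ (isUnit_iff_ne_zero.mpr hdet),
      Matrix.one_mulVec]
  refine (Submodule.mem_span_range_iff_exists_fun K).mpr ⟨c, ?_⟩
  ext u
  rw [coeff_sum]
  by_cases hu : u ∈ Set.range e
  · obtain ⟨t, rfl⟩ := hu
    simpa [Matrix.mulVec, dotProduct, mul_comm, M] using congr_fun hMc t
  · have h0 : ∀ p : MvPolynomial σ K, ↑p.support ⊆ Set.range e → coeff u p = 0 :=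
      fun p hp ↦ notMem_support_iff.mp fun h ↦ hu (hp h)
    simp [h0 f hf, h0 _ (hΘ _)]

/-- The determinant of the coefficient matrix is a polynomial in `ω` of degree at most `card ι`
(its entries are linear), and it is nonzero because it equals `1` at `ω₀`. -/
theorem one_sub_card_mul_le_measure_mem_span [MeasurableSpace K] [MeasurableSingletonClass K]
    [Countable K] {Ω : Type*} [Fintype Ω] (μ : Ω → Measure K) [∀ k, IsProbabilityMeasure (μ k)]
    {ε : ℝ≥0∞} (hμ : ∀ k x, μ k {x} ≤ ε) {e : ι → σ →₀ ℕ} (he : Function.Injective e)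
    (Θ : ι → (Ω → K) →ₗ[K] MvPolynomial σ K) (hΘ : ∀ j ω, ↑(Θ j ω).support ⊆ Set.range e)
    (ω₀ : Ω → K) (hω₀ : ∀ j, Θ j ω₀ = monomial (e j) 1) :
    1 - Fintype.card ι * ε ≤ Measure.pi μ {ω | ∀ f : MvPolynomial σ K,
      ↑f.support ⊆ Set.range e → f ∈ Submodule.span K (Set.range fun j ↦ Θ j ω)} := by
  obtain ⟨P, hPdeg, hPeval⟩ :=
    exists_mvPolynomial_eval_eq_det fun t j ↦ (lcoeff K (e t)).comp (Θ j)
  have hP : P ≠ 0 := by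
    rintro rfl
    have hone : (Matrix.of fun t j ↦ coeff (e t) (Θ j ω₀)) = 1 := by
      ext t j
      classical
      simp [hω₀, coeff_monomial, he.eq_iff, Matrix.one_apply, eq_comm]
    simpa [hone] using hPeval ω₀
  have hbad : Measure.pi μ {ω | eval ω P = 0} ≤ Fintype.card ι * ε :=
    (measure_pi_eval_eq_zero_le μ hμ hP).trans (by gcongr)
  calc 1 - Fintype.card ι * ε ≤ 1 - Measure.pi μ {ω | eval ω P = 0} := tsub_le_tsub_left hbad 1
    _ = Measure.pi μ {ω | eval ω P = 0}ᶜ :=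
        (prob_compl_eq_one_sub (Set.to_countable _).measurableSet).symm
    _ ≤ _ := by
        refine measure_mono fun ω hω f hf ↦ ?_
        exact mem_span_of_det_coeff_ne_zero e (hΘ · ω) hf (by simpa [hPeval] using hω)

end Span

section GeneratedIdeal

variable {σ ι R : Type*} [CommSemiring R] [Fintype ι]

/-- The paper's `I_d({pᵢ})` for polynomials `pᵢ` of degree `D`. -/
def generatedIdeal (D d : ℕ) (p : ι → MvPolynomial σ R) : Submodule R (MvPolynomial σ R) where
  carrier := {g | ∃ a : ι → MvPolynomial σ R, (∀ i, (a i).totalDegree ≤ d - D) ∧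
    ∑ i, a i * p i = g}
  zero_mem' := ⟨0, by simp, by simp⟩
  add_mem' := by
    rintro _ _ ⟨a, ha, rfl⟩ ⟨b, hb, rfl⟩
    refine ⟨a + b, fun i ↦ (totalDegree_add _ _).trans (max_le (ha i) (hb i)), ?_⟩
    simp [add_mul, Finset.sum_add_distrib]
  smul_mem' := by
    rintro c _ ⟨a, ha, rfl⟩
    refine ⟨c • a, fun i ↦ (totalDegree_smul_le _ _).trans (ha i), ?_⟩
    simp [Finset.smul_sum]

def IsCompleteAt (D d : ℕ) (p : ι → MvPolynomial σ R) : Prop :=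
  ∀ f : MvPolynomial σ R, f.IsHomogeneous d → f ∈ generatedIdeal D d p

lemma mul_mem_generatedIdeal {D d : ℕ} (p : ι → MvPolynomial σ R) {a : MvPolynomial σ R}
    (ha : a.totalDegree ≤ d - D) (i : ι) : a * p i ∈ generatedIdeal D d p := by
  classical
  refine ⟨Pi.single i a, fun j ↦ ?_, by simp [Pi.single_apply]⟩
  rcases eq_or_ne j i with rfl | hj <;> simp [*]

end GeneratedIdeal

section Monomials

variable {σ : Type*}

lemma Multiset.degree_toFinsupp [DecidableEq σ] (s : Multiset σ) :
    (Multiset.toFinsupp s).degree = Multiset.card s :=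
  Multiset.toFinsupp_sum_eq s

lemma Multiset.prod_map_X [DecidableEq σ] {R : Type*} [CommSemiring R] (s : Multiset σ) :
    (s.map (X : σ → MvPolynomial σ R)).prod = monomial (Multiset.toFinsupp s) 1 := by
  induction s using Multiset.induction_on with
  | empty => simp
  | cons a s ih =>
    rw [Multiset.map_cons, Multiset.prod_cons, ih, X, monomial_mul, one_mul,
      ← Multiset.singleton_add, Multiset.toFinsupp_add, Multiset.toFinsupp_singleton]

lemma symMonomial_eq_monomial {n D : ℕ} (s : Sym (Fin n) D) :
    symMonomial s = monomial (Multiset.toFinsupp (s : Multiset (Fin n))) 1 :=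
  Multiset.prod_map_X _

lemma mem_range_toFinsupp_of_degree_eq [DecidableEq σ] {k : ℕ} {u : σ →₀ ℕ} (hu : u.degree = k) :
    u ∈ Set.range fun s : Sym σ k ↦ Multiset.toFinsupp (s : Multiset σ) :=
  ⟨⟨Finsupp.toMultiset u, by rw [← Multiset.degree_toFinsupp, Finsupp.toMultiset_toFinsupp, hu]⟩,
    Finsupp.toMultiset_toFinsupp u⟩

lemma MvPolynomial.IsHomogeneous.degree_eq_of_mem_support {R : Type*} [CommSemiring R]
    {p : MvPolynomial σ R} {k : ℕ} (hp : p.IsHomogeneous k) {u : σ →₀ ℕ} (hu : u ∈ p.support) :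
    u.degree = k :=
  by_contra fun h ↦ mem_support_iff.mp hu (hp.coeff_eq_zero h)

lemma MvPolynomial.degree_eq_or_of_mem_support_sub {R : Type*} [CommRing R]
    {p q : MvPolynomial σ R} {a b : ℕ} (hp : p.IsHomogeneous a) (hq : q.IsHomogeneous b)
    {u : σ →₀ ℕ} (hu : u ∈ (p - q).support) : u.degree = a ∨ u.degree = b := by
  classical
  exact (Finset.mem_union.mp (support_sub σ p q hu)).imp hp.degree_eq_of_mem_support
    hq.degree_eq_of_mem_support

end Monomials

section RandomSystem

variable {n D m : ℕ}

/-- Coordinates of a system `(gᵢ - bᵢ)ᵢ`: the coefficient of `x^s` in `gᵢ` sits at `inl (i, s)`,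
and `bᵢ` at `inr i`. -/
abbrev CoeffIndex (m n D : ℕ) := (Fin m × Sym (Fin n) D) ⊕ Fin m

/-- `gᵢ - bᵢ` as a linear function of the coordinates. -/
noncomputable def shiftedForm (i : Fin m) :
    (CoeffIndex m n D → ℚ) →ₗ[ℚ] MvPolynomial (Fin n) ℚ where
  toFun ω := (∑ s, C (ω (.inl (i, s))) * symMonomial s) - C (ω (.inr i))
  map_add' ω ω' := by
    simp only [Pi.add_apply, map_add, add_mul, Finset.sum_add_distrib]
    ring
  map_smul' c ω := by
    simp only [Pi.smul_apply, smul_eq_mul, map_mul, mul_assoc, ← Finset.mul_sum,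
      RingHom.id_apply, smul_eq_C_mul, mul_sub]

lemma isHomogeneous_sum_C_mul_symMonomial (c : Sym (Fin n) D → ℚ) :
    (∑ s, C (c s) * symMonomial s).IsHomogeneous D :=
  IsHomogeneous.sum _ _ _ fun s _ ↦ by
    rw [symMonomial_eq_monomial, C_mul_monomial, mul_one]
    exact isHomogeneous_monomial _ (by rw [Multiset.degree_toFinsupp, s.card_coe])

def witness (lab : Fin m → Option (Sym (Fin n) D)) : CoeffIndex m n D → ℚ
  | .inl (i, s) => if lab i = some s then 1 else 0
  | .inr i => if lab i = none then -1 else 0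

lemma shiftedForm_witness (lab : Fin m → Option (Sym (Fin n) D)) (i : Fin m) :
    shiftedForm i (witness lab) = (lab i).elim 1 symMonomial := by
  rcases h : lab i with _ | s <;> simp [shiftedForm, witness, h]

end RandomSystem

section Certificate

variable {n D m d : ℕ}

noncomputable def rowExp : Sym (Fin n) d ⊕ Sym (Fin n) (d - D) → Fin n →₀ ℕ :=
  Sum.elim (fun α ↦ Multiset.toFinsupp α) (fun γ ↦ Multiset.toFinsupp γ)

lemma rowExp_injective (hD : 0 < D) (hDd : D ≤ d) :
    Function.Injective (rowExp : Sym (Fin n) d ⊕ Sym (Fin n) (d - D) → _) := by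
  have hdeg : d - D ≠ d := by omega
  rintro (α | γ) (α' | γ') h <;>
    simp only [rowExp, Sum.elim_inl, Sum.elim_inr, Sum.inl.injEq, Sum.inr.injEq,
      reduceCtorEq] at h ⊢
  · exact Sym.coe_injective (Multiset.toFinsupp.injective h)
  · exact hdeg (by simpa [Multiset.degree_toFinsupp] using congr_arg Finsupp.degree h.symm)
  · exact hdeg (by simpa [Multiset.degree_toFinsupp] using congr_arg Finsupp.degree h)
  · exact Sym.coe_injective (Multiset.toFinsupp.injective h)

lemma mem_range_rowExp {u : Fin n →₀ ℕ} (hu : u.degree = d ∨ u.degree = d - D) :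
    u ∈ Set.range (rowExp : Sym (Fin n) d ⊕ Sym (Fin n) (d - D) → _) := by
  rcases hu with hu | hu
  · obtain ⟨α, rfl⟩ := mem_range_toFinsupp_of_degree_eq hu
    exact ⟨.inl α, rfl⟩
  · obtain ⟨γ, rfl⟩ := mem_range_toFinsupp_of_degree_eq hu
    exact ⟨.inr γ, rfl⟩

lemma support_monomial_mul_shiftedForm_subset (hDd : D ≤ d) {v : Fin n →₀ ℕ}
    (hv : v.degree = d - D) (i : Fin m) (ω : CoeffIndex m n D → ℚ) :
    ↑(monomial v 1 * shiftedForm i ω).support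
      ⊆ Set.range (rowExp : Sym (Fin n) d ⊕ Sym (Fin n) (d - D) → _) := by
  intro u hu
  have hp := (isHomogeneous_monomial (1 : ℚ) hv).mul
    (isHomogeneous_sum_C_mul_symMonomial fun s ↦ ω (.inl (i, s)))
  have hq := (isHomogeneous_monomial (1 : ℚ) hv).mul (isHomogeneous_C (Fin n) (ω (.inr i)))
  rw [Nat.sub_add_cancel hDd] at hp
  exact mem_range_rowExp (degree_eq_or_of_mem_support_sub hp hq (by rwa [← mul_sub]))

theorem one_sub_card_mul_le_measure_isCompleteAt (hD : 0 < D) (hDd : D ≤ d)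
    (μ : CoeffIndex m n D → Measure ℚ) [∀ k, IsProbabilityMeasure (μ k)] {ε : ℝ≥0∞}
    (hμ : ∀ k x, μ k {x} ≤ ε) (lab : Fin m → Option (Sym (Fin n) D))
    (hcover : ∀ α : Sym (Fin n) d, ∃ i s, lab i = some s ∧ (s : Multiset (Fin n)) ≤ α)
    (hunit : ∃ i, lab i = none) :
    1 - ((Nat.multichoose n d + Nat.multichoose n (d - D) : ℕ) : ℝ≥0∞) * ε ≤
      Measure.pi μ {ω | IsCompleteAt D d fun i ↦ shiftedForm i ω} := by
  choose gen s hgen hs using hcover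
  obtain ⟨i₀, hi₀⟩ := hunit
  let cofactor : Sym (Fin n) d ⊕ Sym (Fin n) (d - D) → Fin n →₀ ℕ :=
    Sum.elim (fun α ↦ Multiset.toFinsupp (↑α - ↑(s α))) (fun γ ↦ Multiset.toFinsupp γ)
  let row : Sym (Fin n) d ⊕ Sym (Fin n) (d - D) → Fin m := Sum.elim gen fun _ ↦ i₀
  let Θ : Sym (Fin n) d ⊕ Sym (Fin n) (d - D) → (CoeffIndex m n D → ℚ) →ₗ[ℚ] _ :=
    fun j ↦ LinearMap.mulLeft ℚ (monomial (cofactor j) (1 : ℚ)) ∘ₗ shiftedForm (row j)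
  have hcofactor : ∀ j, (cofactor j).degree = d - D := by
    rintro (α | γ)
    · simp [cofactor, Multiset.degree_toFinsupp, Multiset.card_sub (hs α)]
    · simp [cofactor, Multiset.degree_toFinsupp]
  have hω₀ : ∀ j, Θ j (witness lab) = monomial (rowExp j) 1 := by
    rintro (α | γ)
    · simp [Θ, row, hgen, shiftedForm_witness, symMonomial_eq_monomial, monomial_mul, cofactor,
        rowExp, ← Multiset.toFinsupp_add, tsub_add_cancel_of_le (hs α)]
    · simp [Θ, row, hi₀, shiftedForm_witness, cofactor, rowExp]
  have hcard : Fintype.card (Sym (Fin n) d ⊕ Sym (Fin n) (d - D))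
      = Nat.multichoose n d + Nat.multichoose n (d - D) := by
    simp [Sym.card_sym_eq_multichoose]
  rw [← hcard]
  refine (one_sub_card_mul_le_measure_mem_span μ hμ (rowExp_injective hD hDd) Θ
    (fun j ↦ support_monomial_mul_shiftedForm_subset hDd (hcofactor j) (row j))
    (witness lab) hω₀).trans (measure_mono fun ω hω f hf ↦ ?_)
  refine Submodule.span_le.mpr ?_ (hω f fun u hu ↦ mem_range_rowExp (.inl ?_))
  · rintro _ ⟨j, rfl⟩
    exact mul_mem_generatedIdeal _ ((totalDegree_monomial_le _ _).trans (hcofactor j).le) (row j)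
  · exact hf.degree_eq_of_mem_support hu

end Certificate

section Covering

lemma Finset.exists_option_labelling {α : Type*} {m : ℕ} (S : Finset α) (hS : S.card < m) :
    ∃ lab : Fin m → Option α, (∀ a ∈ S, ∃ i, lab i = some a) ∧ ∃ i, lab i = none := by
  classical
  refine ⟨fun i ↦ S.toList[(i : ℕ)]?, fun a ha ↦ ?_, ⟨S.card, hS⟩, by simp⟩
  obtain ⟨k, hk, hka⟩ := List.getElem_of_mem (S.mem_toList.mpr ha)
  exact ⟨⟨k, (S.length_toList ▸ hk).trans hS⟩, (List.getElem?_eq_getElem hk).trans (by rw [hka])⟩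

lemma Finset.card_sym {α : Type*} [DecidableEq α] (s : Finset α) (k : ℕ) :
    (s.sym k).card = Nat.multichoose s.card k := by
  conv_lhs => rw [← s.attach_map_val, sym_map, card_map, attach_eq_univ, sym_univ, card_univ,
    Sym.card_sym_eq_multichoose, Fintype.card_coe]

lemma Nat.multichoose_le_pow (n k : ℕ) : Nat.multichoose n k ≤ (n + k) ^ k := by
  rw [Nat.multichoose_eq]
  exact (Nat.choose_le_pow _ _).trans (Nat.pow_le_pow_left (by omega) _)

lemma Nat.multichoose_le_multichoose {a b : ℕ} (hab : a ≤ b) (k : ℕ) :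
    Nat.multichoose a k ≤ Nat.multichoose b k := by
  rw [Nat.multichoose_eq, Nat.multichoose_eq]
  exact Nat.choose_le_choose k (by omega)

lemma Multiset.exists_le_card_eq_of_mul_lt {α : Type*} {t k : ℕ} (β : α → Fin t)
    (s : Multiset α) (hs : t * (k - 1) < Multiset.card s) :
    ∃ b, ∃ r ≤ s, Multiset.card r = k ∧ ∀ x ∈ r, β x = b := by
  classical
  obtain ⟨b, hb⟩ : ∃ b, k ≤ Multiset.card (s.filter (β · = b)) := by
    by_contra! h
    have hcount : ∀ b, Multiset.count b (s.map β) ≤ k - 1 := fun b ↦ by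
      have := h b
      rw [Multiset.count_map]
      simp only [eq_comm] at this ⊢
      omega
    have := Finset.sum_le_card_nsmul Finset.univ _ _ fun b _ ↦ hcount b
    rw [Multiset.sum_count_eq_card (fun _ _ ↦ Finset.mem_univ _), Multiset.card_map,
      Finset.card_univ, Fintype.card_fin, smul_eq_mul] at this
    omega
  obtain ⟨r, hr⟩ := Multiset.card_pos_iff_exists_mem.mp
    (by rw [Multiset.card_powersetCard]; exact Nat.choose_pos hb)
  obtain ⟨hrs, hrk⟩ := Multiset.mem_powersetCard.mp hr
  exact ⟨b, r, hrs.trans (Multiset.filter_le _ _), hrk,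
    fun x hx ↦ (Multiset.mem_filter.mp (Multiset.mem_of_le hrs hx)).2⟩

lemma exists_sym_cover {α : Type*} [Fintype α] [DecidableEq α] {t L D d : ℕ} (β : α → Fin t)
    (hβ : ∀ b, (Finset.univ.filter (β · = b)).card ≤ L) (hd : t * (D - 1) < d) :
    ∃ S : Finset (Sym α D), S.card ≤ t * Nat.multichoose L D ∧
      ∀ a : Sym α d, ∃ s ∈ S, (s : Multiset α) ≤ a := by
  refine ⟨Finset.univ.biUnion fun b ↦ (Finset.univ.filter (β · = b)).sym D, ?_, fun a ↦ ?_⟩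
  · calc _ ≤ ∑ b, ((Finset.univ.filter (β · = b)).sym D).card := Finset.card_biUnion_le
      _ ≤ ∑ _b : Fin t, Nat.multichoose L D := Finset.sum_le_sum fun b _ ↦ by
          rw [Finset.card_sym]; exact Nat.multichoose_le_multichoose (hβ b) D
      _ = t * Nat.multichoose L D := by simp
  · obtain ⟨b, r, hra, hr, hrb⟩ :=
      (a : Multiset α).exists_le_card_eq_of_mul_lt β (by simpa using hd)
    exact ⟨⟨r, hr⟩, Finset.mem_biUnion.mpr ⟨b, Finset.mem_univ _,
      Finset.mem_sym_iff.mpr fun x hx ↦ by simpa using hrb x hx⟩, hra⟩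

lemma div_div_add_one_add_mul_le {n D d : ℕ} (hD : 0 < D) (hDd : D ≤ d) (hdn : d ≤ n) :
    (n / (d / D) + 1 + D) * d ≤ 4 * D * n := by
  set t := d / D
  have ht : 1 ≤ t := (Nat.one_le_div_iff hD).mpr hDd
  have hdt : d ≤ 2 * D * t := by
    have : d < t * D + D := Nat.lt_div_mul_add hD
    nlinarith
  have hnt : n / t * t ≤ n := Nat.div_mul_le_self n t
  have h1 : n / t * d ≤ 2 * D * n := by
    calc n / t * d ≤ n / t * (2 * D * t) := Nat.mul_le_mul_left _ hdt
      _ = 2 * D * (n / t * t) := by ring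
      _ ≤ 2 * D * n := Nat.mul_le_mul_left _ hnt
  nlinarith

lemma exists_sym_fin_cover {n D d : ℕ} (hD : 0 < D) (hDd : D ≤ d) (hdn : d ≤ n) :
    ∃ S : Finset (Sym (Fin n) D), S.card * d ^ (D - 1) ≤ (4 * D * n) ^ D ∧
      ∀ α : Sym (Fin n) d, ∃ s ∈ S, (s : Multiset (Fin n)) ≤ α := by
  set t := d / D
  set L := n / t + 1
  have ht : 1 ≤ t := (Nat.one_le_div_iff hD).mpr hDd
  have hnL : n < t * L := by
    have : n < n / t * t + t := Nat.lt_div_mul_add ht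
    simp only [L]; nlinarith
  let β : Fin n → Fin t := fun x ↦ ⟨x / L, Nat.div_lt_of_lt_mul (by nlinarith [x.2])⟩
  have hβ : ∀ b, (Finset.univ.filter (β · = b)).card ≤ L := fun b ↦ by
    refine (Finset.card_le_card_of_injOn (t := Finset.range L) (fun x : Fin n ↦ (x : ℕ) % L)
      (fun x _ ↦ ?_) ?_).trans (Finset.card_range L).le
    · exact Finset.mem_range.mpr (Nat.mod_lt _ (Nat.succ_pos _))
    · intro x hx y hy hxy
      simp only [Finset.coe_filter, Finset.mem_univ, true_and, Set.mem_ofPred_eq, β,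
        Fin.ext_iff] at hx hy hxy
      rw [Fin.ext_iff, ← Nat.div_add_mod x L, ← Nat.div_add_mod y L, hx, hy, hxy]
  have hd : t * (D - 1) < d := by
    have : t * D ≤ d := Nat.div_mul_le_self d D
    have : t * (D - 1) + t = t * D := by rw [← Nat.mul_succ]; congr 1; omega
    omega
  obtain ⟨S, hS, hcover⟩ := exists_sym_cover β hβ hd
  refine ⟨S, ?_, hcover⟩
  have hdD : d * d ^ (D - 1) = d ^ D := by rw [← pow_succ']; congr 1; omega
  calc S.card * d ^ (D - 1) ≤ t * (L + D) ^ D * d ^ (D - 1) := by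
        gcongr; exact hS.trans (Nat.mul_le_mul_left _ (Nat.multichoose_le_pow L D))
    _ ≤ d * (L + D) ^ D * d ^ (D - 1) := by gcongr; exact Nat.div_le_self d D
    _ = ((L + D) * d) ^ D := by rw [mul_pow, ← hdD]; ring
    _ ≤ (4 * D * n) ^ D := Nat.pow_le_pow_left (div_div_add_one_add_mul_le hD hDd hdn) D

end Covering

section Arithmetic

lemma ENNReal.natCast_mul_one_div_le {a b c : ℕ} (hb : b ≠ 0) (h : a * b ≤ c) :
    (a : ℝ≥0∞) * (1 / c) ≤ 1 / b := by
  rw [ENNReal.le_div_iff_mul_le (by simp [hb]) (by simp), mul_right_comm, mul_one_div]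
  exact ENNReal.div_le_of_le_mul (by rw [one_mul]; exact_mod_cast h)

lemma multichoose_add_multichoose_mul_pow_le {n d k : ℕ} (hn : 2 ≤ n) (hd : 1 ≤ d)
    (hdn : d ≤ n) :
    (Nat.multichoose n d + Nat.multichoose n (d - k)) * n ^ d ≤ (n ^ (2 * d)) ^ 100 := by
  have hmc : ∀ j ≤ d, Nat.multichoose n j ≤ n ^ (2 * d) := fun j hj ↦
    calc Nat.multichoose n j ≤ (n + j) ^ j := Nat.multichoose_le_pow n j
      _ ≤ (n * n) ^ j := Nat.pow_le_pow_left (by nlinarith) j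
      _ ≤ (n * n) ^ d := Nat.pow_le_pow_right (by positivity) hj
      _ = n ^ (2 * d) := by ring
  calc _ ≤ (n ^ (2 * d) + n ^ (2 * d)) * n ^ d := by
        gcongr <;> apply hmc <;> omega
    _ ≤ n ^ (2 * d) * n * n ^ d := by rw [← mul_two]; gcongr
    _ = n ^ (3 * d + 1) := by ring
    _ ≤ n ^ (200 * d) := Nat.pow_le_pow_right (by omega) (by omega)
    _ = (n ^ (2 * d)) ^ 100 := by ring

lemma lt_of_mul_pow_le {k n m D d : ℕ} (hD : 1 ≤ D) (hd : 1 ≤ d) (hdn : d ≤ n)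
    (hk : k * d ^ (D - 1) ≤ (4 * D * n) ^ D)
    (hm : 2 * (4 * D : ℝ) ^ D * (n : ℝ) ^ D / (d : ℝ) ^ (D - 1) ≤ m) : k < m := by
  have hpos : (0 : ℝ) < (d : ℝ) ^ (D - 1) := by positivity
  have hdpow : d ^ (D - 1) ≤ (4 * D * n) ^ D :=
    calc d ^ (D - 1) ≤ d ^ D := Nat.pow_le_pow_right hd (by omega)
      _ ≤ (4 * D * n) ^ D := Nat.pow_le_pow_left (by nlinarith) D
  have hk' : ((k + 1 : ℕ) : ℝ) * (d : ℝ) ^ (D - 1) ≤ 2 * (4 * D : ℝ) ^ D * (n : ℝ) ^ D := by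
    have : (k + 1) * d ^ (D - 1) ≤ 2 * ((4 * D) ^ D * n ^ D) := by
      rw [← mul_pow]; nlinarith
    exact_mod_cast this.trans_eq (by ring)
  have := (le_div_iff₀ hpos).mpr hk' |>.trans hm
  exact_mod_cast this

end Arithmetic

/-- **Completeness of generated ideals of random polynomial systems.**
For every `D ≥ 2` there is `C = C(D) > 0` such that for `2 ≤ D ≤ d ≤ n` and
`m ≥ C·n^D/d^(D-1)`, if the coefficients of the homogeneous degree-`D` polynomials
`g_1, …, g_m` and the scalars `b_1, …, b_m` are sampled independently from `n^(2d)`-nice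
distributions on `ℚ`, then with probability at least `1 - n^(-d)` the generated ideal of
`{g_i - b_i}` at degree `d` is complete: every homogeneous polynomial of degree `d` equals
`∑ i, a_i·(g_i - b_i)` with each `a_i` of degree at most `d - D`. -/
theorem generated_ideal_complete_random_polynomials :
    ∀ D : ℕ, 2 ≤ D →
      ∃ C : ℝ, 0 < C ∧
        ∀ d n m : ℕ, D ≤ d → d ≤ n →
          C * (n : ℝ) ^ D / (d : ℝ) ^ (D - 1) ≤ (m : ℝ) →
          ∀ ν : ((Fin m × Sym (Fin n) D) ⊕ Fin m) → Measure ℚ,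
            (∀ i, IsNiceDistribution (n ^ (2 * d)) (ν i)) →
            1 - 1 / (n : ℝ≥0∞) ^ d ≤
              Measure.pi ν
                {ω : ((Fin m × Sym (Fin n) D) ⊕ Fin m) → ℚ |
                  ∀ f : MvPolynomial (Fin n) ℚ, f.IsHomogeneous d →
                    ∃ a : Fin m → MvPolynomial (Fin n) ℚ,
                      (∀ i, (a i).totalDegree ≤ d - D) ∧
                      (∑ i : Fin m,
                          a i *
                            ((∑ s : Sym (Fin n) D,
                                MvPolynomial.C (ω (Sum.inl (i, s))) * symMonomial s) -
                              MvPolynomial.C (ω (Sum.inr i))) = f)} := by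
  intro D hD
  refine ⟨2 * (4 * D : ℝ) ^ D, by positivity, ?_⟩
  intro d n m hDd hdn hm ν hν
  have : ∀ i, IsProbabilityMeasure (ν i) := fun i ↦ (hν i).1
  obtain ⟨S, hS, hcover⟩ := exists_sym_fin_cover (by omega) hDd hdn
  obtain ⟨lab, hlab, hunit⟩ :=
    S.exists_option_labelling (lt_of_mul_pow_le (by omega) (by omega) hdn hS hm)
  have hlabcover : ∀ α : Sym (Fin n) d, ∃ i s, lab i = some s ∧ (s : Multiset (Fin n)) ≤ α :=
    fun α ↦ by
      obtain ⟨s, hs, hsα⟩ := hcover α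
      obtain ⟨i, hi⟩ := hlab s hs
      exact ⟨i, s, hi, hsα⟩
  have hbad : ((Nat.multichoose n d + Nat.multichoose n (d - D) : ℕ) : ℝ≥0∞)
      * (1 / ((n ^ (2 * d) : ℕ) : ℝ≥0∞) ^ 100) ≤ 1 / (n : ℝ≥0∞) ^ d := by
    simpa using ENNReal.natCast_mul_one_div_le (pow_ne_zero d (by omega : n ≠ 0))
      (multichoose_add_multichoose_mul_pow_le (k := D) (by omega) (by omega) hdn)
  exact (tsub_le_tsub_left hbad 1).trans (one_sub_card_mul_le_measure_isCompleteAt (by omega) hDd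
    ν (fun i ↦ (hν i).2.2) lab hlabcover hunit)
end

section
/- Let D, d, m, n be positive integers with d a multiple of D. Let g_1, …, g_m be homogeneous real polynomials of degree D in variables x_1, …, x_n, and let b_1, …, b_m ∈ ℝ with b_1 ≠ 0. Suppose that every homogeneous polynomial of degree d in x_1, …, x_n can be written as Σ_{i=1}^m a_i·(g_i − b_i) with each a_i a polynomial of degree at most d − D. Then there exist polynomials a_1, …, a_m of degree at most d − D such that the polynomial identity Σ_{i=1}^m a_i·(g_i − b_i) = −1 holds. -/
/-!
Write `d = k D` and `e = d - D`. The polynomial `g₁ᵏ` is homogeneous of degree `d`, so it is a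
combination `∑ aᵢ (gᵢ - bᵢ)` with `deg aᵢ ≤ e`. The geometric sum `q = ∑_{j<k} g₁ʲ b₁^(k-1-j)`
has degree at most `(k - 1) D = e` and `q (g₁ - b₁) = g₁ᵏ - b₁ᵏ`. Subtracting, the nonzero constant
`b₁ᵏ` is such a combination, and dividing by `-b₁ᵏ` gives `-1`.
-/

open MvPolynomial Finset

section DegreeBoundedSpan

variable {R σ ι : Type*} [CommSemiring R] [Fintype ι]

/-- The paper's generated ideal at degree `d` is `degreeBoundedSpan f (d - D)`. -/
def degreeBoundedSpan (f : ι → MvPolynomial σ R) (e : ℕ) : Submodule R (MvPolynomial σ R) where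
  carrier := {p | ∃ a : ι → MvPolynomial σ R, (∀ i, (a i).totalDegree ≤ e) ∧ ∑ i, a i * f i = p}
  zero_mem' := ⟨0, fun _ => by simp, by simp⟩
  add_mem' := by
    rintro _ _ ⟨a, ha, rfl⟩ ⟨a', ha', rfl⟩
    refine ⟨a + a', fun i => (totalDegree_add _ _).trans (max_le (ha i) (ha' i)), ?_⟩
    simp only [Pi.add_apply, add_mul, sum_add_distrib]
  smul_mem' := by
    rintro c _ ⟨a, ha, rfl⟩
    refine ⟨c • a, fun i => (totalDegree_smul_le _ _).trans (ha i), ?_⟩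
    simp only [Pi.smul_apply, smul_mul_assoc, smul_sum]

theorem mem_degreeBoundedSpan_iff {f : ι → MvPolynomial σ R} {e : ℕ} {p : MvPolynomial σ R} :
    p ∈ degreeBoundedSpan f e ↔
      ∃ a : ι → MvPolynomial σ R, (∀ i, (a i).totalDegree ≤ e) ∧ ∑ i, a i * f i = p :=
  Iff.rfl

theorem mul_mem_degreeBoundedSpan [DecidableEq ι] (f : ι → MvPolynomial σ R) {e : ℕ}
    {q : MvPolynomial σ R} (hq : q.totalDegree ≤ e) (i : ι) :
    q * f i ∈ degreeBoundedSpan f e := by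
  refine ⟨Pi.single i q, fun j => ?_, ?_⟩
  · rcases eq_or_ne j i with rfl | hj
    · simpa using hq
    · simp [hj]
  · rw [sum_eq_single i (fun j _ hj => by simp [hj]) (by simp)]
    simp

end DegreeBoundedSpan

theorem totalDegree_geom_sum₂_le {R σ : Type*} [CommSemiring R] (p q : MvPolynomial σ R)
    (k : ℕ) : (∑ j ∈ range k, p ^ j * q ^ (k - 1 - j)).totalDegree ≤
      (k - 1) * max p.totalDegree q.totalDegree := by
  refine (totalDegree_finsetSum _ _).trans (Finset.sup_le fun j hj => ?_)
  have hj : j ≤ k - 1 := Nat.le_sub_one_of_lt (mem_range.mp hj)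
  calc (p ^ j * q ^ (k - 1 - j)).totalDegree
      ≤ j * p.totalDegree + (k - 1 - j) * q.totalDegree :=
        (totalDegree_mul _ _).trans (add_le_add (totalDegree_pow _ _) (totalDegree_pow _ _))
    _ ≤ j * max p.totalDegree q.totalDegree + (k - 1 - j) * max p.totalDegree q.totalDegree := by
        gcongr
        exacts [le_max_left _ _, le_max_right _ _]
    _ = (k - 1) * max p.totalDegree q.totalDegree := by
        rw [← add_mul, Nat.add_sub_cancel' hj]

theorem nullsatz_refutation_of_complete_ideal_general
    (D d m n : ℕ) (hm : 0 < m)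
    (hdvd : D ∣ d)
    (g : Fin m → MvPolynomial (Fin n) ℝ) (hg : ∀ i, (g i).IsHomogeneous D)
    (b : Fin m → ℝ) (hb1 : b ⟨0, hm⟩ ≠ 0)
    (hcomplete : ∀ f : MvPolynomial (Fin n) ℝ, f.IsHomogeneous d →
      ∃ a : Fin m → MvPolynomial (Fin n) ℝ,
        (∀ i, (a i).totalDegree ≤ d - D) ∧
        ∑ i : Fin m, a i * (g i - MvPolynomial.C (b i)) = f) :
    ∃ a : Fin m → MvPolynomial (Fin n) ℝ,
      (∀ i, (a i).totalDegree ≤ d - D) ∧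
      ∑ i : Fin m, a i * (g i - MvPolynomial.C (b i)) = -1 := by
  obtain ⟨k, rfl⟩ := hdvd
  set S := degreeBoundedSpan (fun i => g i - C (b i)) (D * k - D)
  set i₀ : Fin m := ⟨0, hm⟩
  have hpow : g i₀ ^ k ∈ S := hcomplete _ ((hg i₀).pow k)
  have hgeom : g i₀ ^ k - C (b i₀) ^ k ∈ S := by
    rw [← geom_sum₂_mul]
    refine mul_mem_degreeBoundedSpan _ ((totalDegree_geom_sum₂_le _ _ k).trans ?_) i₀
    rw [totalDegree_C, Nat.max_zero, mul_comm D k, ← Nat.sub_one_mul]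
    exact Nat.mul_le_mul_left _ (hg i₀).totalDegree_le
  have hconst : C (b i₀ ^ k) ∈ S := by simpa using S.sub_mem hpow hgeom
  have hunit : -(b i₀ ^ k)⁻¹ • C (b i₀ ^ k) = (-1 : MvPolynomial (Fin n) ℝ) := by
    rw [smul_eq_C_mul, ← C_mul, neg_mul, inv_mul_cancel₀ (pow_ne_zero k hb1), C_neg, C_1]
  exact hunit ▸ S.smul_mem _ hconst

/-- **From completeness of the generated ideal to a Nullstellensatz refutation.**
Let `D, d, m, n` be positive integers with `D ∣ d`. Let `g_1, …, g_m` be homogeneous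
degree-`D` real polynomials in `n` variables and `b : Fin m → ℝ` with `b 0 ≠ 0`. If every
homogeneous polynomial of degree `d` can be written as `∑ i, a_i·(g_i - b_i)` with each
`a_i` of degree at most `d - D`, then there are polynomials `a_i` of degree at most `d - D`
with `∑ i, a_i·(g_i - b_i) = -1`. -/
theorem nullsatz_refutation_of_complete_ideal
    (D d m n : ℕ) (hD : 0 < D) (hd : 0 < d) (hm : 0 < m) (hn : 0 < n)
    (hdvd : D ∣ d)
    (g : Fin m → MvPolynomial (Fin n) ℝ) (hg : ∀ i, (g i).IsHomogeneous D)
    (b : Fin m → ℝ) (hb1 : b ⟨0, hm⟩ ≠ 0)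
    (hcomplete : ∀ f : MvPolynomial (Fin n) ℝ, f.IsHomogeneous d →
      ∃ a : Fin m → MvPolynomial (Fin n) ℝ,
        (∀ i, (a i).totalDegree ≤ d - D) ∧
        ∑ i : Fin m, a i * (g i - MvPolynomial.C (b i)) = f) :
    ∃ a : Fin m → MvPolynomial (Fin n) ℝ,
      (∀ i, (a i).totalDegree ≤ d - D) ∧
      ∑ i : Fin m, a i * (g i - MvPolynomial.C (b i)) = -1 :=
  nullsatz_refutation_of_complete_ideal_general D d m n hm hdvd g hg b hb1 hcomplete
end

section
/- Let d, n, K be positive integers with K ≤ n^{2d}. Let A, B', C₁, C₂ be fixed matrices with rational entries, where A has full row rank, B' is K × K, and the block matrix M' = [[A, C₂], [C₁, B' + g·I_K]] is well-formed (some columns of A, C₁ and of C₂, B' + g·I_K aligned as indicated). Let g be a ℚ-valued random variable satisfying P(g = r) ≤ n^{−200d} for every rational r. Then with probability at least 1 − n^{−100d} over g, the matrix M' has full row rank. -/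
open MeasureTheory
open scoped ENNReal

open Matrix Polynomial

/-!
Right multiplication by `[[Aᵀ, 0], [0, 1]]` turns `M'` into a block matrix with invertible corner
`A Aᵀ`; by the Schur complement formula its determinant is `det (A Aᵀ) * det (g • 1 - E)` with
`E = C₁ Aᵀ (A Aᵀ)⁻¹ C₂ - B'`. So `M'` can only lose full row rank at one of the at most `K` roots
of the characteristic polynomial of `E`, an event of probability at most
`K n^(-200d) ≤ n^(-100d)`.
-/

namespace Matrix

variable {m n : Type*} [Fintype m] [Fintype n]

theorem linearIndependent_rows_of_isUnit_mul {R : Type*} [CommRing R] [DecidableEq m]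
    {M : Matrix m n R} {F : Matrix n m R} (h : IsUnit (M * F)) : LinearIndependent R M.row := by
  rw [← vecMul_injective_iff]
  refine Function.Injective.of_comp (f := fun v => v ᵥ* F) ?_
  simpa only [Function.comp_def, vecMul_vecMul] using vecMul_injective_of_isUnit h

variable {𝕜 : Type*} [Field 𝕜] [LinearOrder 𝕜] [IsStrictOrderedRing 𝕜]

theorem isUnit_mul_transpose_self [DecidableEq m] {A : Matrix m n 𝕜}
    (hA : LinearIndependent 𝕜 A.row) : IsUnit (A * Aᵀ) := by
  have hker := ker_mulVecLin_transpose_mul_self Aᵀ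
  rw [transpose_transpose] at hker
  rw [← mulVec_injective_iff_isUnit, ← coe_mulVecLin, ← LinearMap.ker_eq_bot, hker,
    LinearMap.ker_eq_bot, coe_mulVecLin, mulVec_injective_iff]
  exact hA

theorem linearIndependent_fromBlocks_of_det_ne_zero {o : Type*} [Fintype o] [DecidableEq m]
    [DecidableEq o] {A : Matrix m n 𝕜} (hA : LinearIndependent 𝕜 A.row) (B : Matrix m o 𝕜)
    (C : Matrix o n 𝕜) (D : Matrix o o 𝕜) (h : (D - C * Aᵀ * (A * Aᵀ)⁻¹ * B).det ≠ 0) :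
    LinearIndependent 𝕜 (fromBlocks A B C D).row := by
  have hG := isUnit_mul_transpose_self hA
  let := hG.invertible
  apply linearIndependent_rows_of_isUnit_mul (F := fromBlocks Aᵀ 0 0 1)
  rw [fromBlocks_multiply, isUnit_iff_isUnit_det]
  simp only [Matrix.mul_zero, Matrix.mul_one, add_zero, zero_add]
  rw [det_fromBlocks₁₁, invOf_eq_nonsing_inv, isUnit_iff_ne_zero]
  exact mul_ne_zero ((isUnit_iff_isUnit_det _).mp hG).ne_zero h

theorem linearIndependent_fromBlocks_add_smul_one {o : Type*} [Fintype o] [DecidableEq m]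
    [DecidableEq o] {A : Matrix m n 𝕜} (hA : LinearIndependent 𝕜 A.row) (B : Matrix m o 𝕜)
    (C : Matrix o n 𝕜) (D : Matrix o o 𝕜) {g : 𝕜}
    (hg : ¬ (C * Aᵀ * (A * Aᵀ)⁻¹ * B - D).charpoly.IsRoot g) :
    LinearIndependent 𝕜 (fromBlocks A B C (D + g • 1)).row := by
  refine linearIndependent_fromBlocks_of_det_ne_zero hA B C _ ?_
  rwa [IsRoot, eval_charpoly, scalar_apply, ← smul_one_eq_diagonal, sub_sub_eq_add_sub,
    add_comm] at hg

end Matrix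

theorem ENNReal.mul_inv_sq_le_inv {a x : ℝ≥0∞} (h : a ≤ x) : a * (x ^ 2)⁻¹ ≤ x⁻¹ :=
  calc a * (x ^ 2)⁻¹ ≤ x * x⁻¹ * x⁻¹ := by
        rw [ENNReal.inv_pow, sq, ← mul_assoc]; gcongr
    _ ≤ x⁻¹ := mul_le_of_le_one_left' (ENNReal.mul_inv_le_one x)

theorem Polynomial.measure_setOf_isRoot_le {R : Type*} [CommRing R] [IsDomain R]
    [MeasurableSpace R] (μ : Measure R) {p : R[X]} (hp : p ≠ 0) {ε : ℝ≥0∞}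
    (hε : ∀ r, μ {r} ≤ ε) : μ {x | p.IsRoot x} ≤ p.natDegree * ε := by
  classical
  have hroots : {x | p.IsRoot x} = ⋃ r ∈ p.roots.toFinset, {r} := by
    ext x; simp [mem_roots hp]
  calc μ {x | p.IsRoot x} ≤ ∑ r ∈ p.roots.toFinset, μ {r} :=
        hroots ▸ measure_biUnion_finset_le _ _
    _ ≤ p.roots.toFinset.card * ε := by
        simpa only [nsmul_eq_mul] using Finset.sum_le_card_nsmul _ _ _ fun r _ => hε r
    _ ≤ p.natDegree * ε := by
        gcongr; exact_mod_cast p.roots.toFinset_card_le.trans p.card_roots'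

theorem block_matrix_full_row_rank_general
    (d n K : ℕ) (hn : 0 < n) (hK : K ≤ n ^ (2 * d))
    {ρ κ : Type} [Fintype ρ] [Fintype κ]
    (A : Matrix ρ κ ℚ) (B' : Matrix (Fin K) (Fin K) ℚ)
    (C₁ : Matrix (Fin K) κ ℚ) (C₂ : Matrix ρ (Fin K) ℚ)
    (hA : LinearIndependent ℚ A)
    (μ : Measure ℚ) (hμ : IsProbabilityMeasure μ)
    (hatom : ∀ r : ℚ, μ {r} ≤ 1 / (n : ℝ≥0∞) ^ (200 * d)) :
    1 - 1 / (n : ℝ≥0∞) ^ (100 * d) ≤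
      μ {g : ℚ |
        LinearIndependent ℚ (Matrix.fromBlocks A C₂ C₁ (B' + g • (1 : Matrix (Fin K) (Fin K) ℚ)))} := by
  classical
  set S := {g : ℚ |
    LinearIndependent ℚ (Matrix.fromBlocks A C₂ C₁ (B' + g • (1 : Matrix (Fin K) (Fin K) ℚ)))}
  set p := (C₁ * Aᵀ * (A * Aᵀ)⁻¹ * C₂ - B').charpoly
  have hK' : (K : ℝ≥0∞) ≤ (n : ℝ≥0∞) ^ (100 * d) := by
    exact_mod_cast hK.trans (Nat.pow_le_pow_right hn (by omega))
  have hbad : μ Sᶜ ≤ 1 / (n : ℝ≥0∞) ^ (100 * d) :=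
    calc μ Sᶜ ≤ μ {g | p.IsRoot g} :=
          measure_mono fun g hg => not_not.mp fun h =>
            hg (linearIndependent_fromBlocks_add_smul_one hA C₂ C₁ B' h)
      _ ≤ K * (1 / (n : ℝ≥0∞) ^ (200 * d)) := by
          simpa [p] using p.measure_setOf_isRoot_le μ (charpoly_monic _).ne_zero hatom
      _ ≤ 1 / (n : ℝ≥0∞) ^ (100 * d) := by
          rw [one_div, one_div, show 200 * d = 100 * d * 2 by ring, pow_mul]
          exact ENNReal.mul_inv_sq_le_inv hK'
  calc 1 - 1 / (n : ℝ≥0∞) ^ (100 * d) ≤ 1 - μ Sᶜ := tsub_le_tsub_left hbad 1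
    _ = μ S := by rw [← prob_compl_eq_one_sub .of_discrete, compl_compl]

/-- **Block matrices with one random diagonal shift have full row rank w.h.p.**
Let `d, n, K` be positive integers with `K ≤ n^(2d)`. Let `A, B', C₁, C₂` be fixed rational
matrices, with `A` of full row rank and `B'` of size `K × K`, and let `g` be a `ℚ`-valued
random variable with `P(g = r) ≤ n^(-200d)` for every rational `r`. Then with probability
at least `1 - n^(-100d)` the block matrix `[[A, C₂], [C₁, B' + g·I_K]]` has full row rank
(its rows are linearly independent). -/
theorem block_matrix_full_row_rank
    (d n K : ℕ) (hd : 0 < d) (hn : 0 < n) (hK : K ≤ n ^ (2 * d))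
    {ρ κ : Type} [Fintype ρ] [Fintype κ]
    (A : Matrix ρ κ ℚ) (B' : Matrix (Fin K) (Fin K) ℚ)
    (C₁ : Matrix (Fin K) κ ℚ) (C₂ : Matrix ρ (Fin K) ℚ)
    (hA : LinearIndependent ℚ A)
    (μ : Measure ℚ) (hμ : IsProbabilityMeasure μ)
    (hatom : ∀ r : ℚ, μ {r} ≤ 1 / (n : ℝ≥0∞) ^ (200 * d)) :
    1 - 1 / (n : ℝ≥0∞) ^ (100 * d) ≤
      μ {g : ℚ |
        LinearIndependent ℚ (Matrix.fromBlocks A C₂ C₁ (B' + g • (1 : Matrix (Fin K) (Fin K) ℚ)))} :=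
  block_matrix_full_row_rank_general d n K hn hK A B' C₁ C₂ hA μ hμ hatom
end

section
/- Let d, n be integers with 2 ≤ d ≤ n. There is an absolute constant C > 0 such that there exist multisets γ_1, …, γ_N, each of size 2 with elements in {1,…,n} (repeated elements allowed), with N ≤ n²/(2(d−1)) + C·n, such that every multiset of size d with elements in {1,…,n} contains at least one γ_k as a sub-multiset. -/
/-!
Colour `{1, …, n}` by residues modulo `d - 1` and take every pair (loops included) inside a colour
class. A multiset of size `d` has two entries of the same colour by pigeonhole, and these form one
of the chosen pairs. A class of size `c` carries `c (c + 1) / 2` pairs and `c ≤ n / (d - 1) + 1`,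
so there are at most `n (n / (d - 1) + 2) / 2` pairs in total.
-/

open Finset

theorem Multiset.exists_pair_le_of_card_lt {α β : Type*} [Fintype β] (f : α → β)
    (t : Multiset α) (ht : Fintype.card β < Multiset.card t) :
    ∃ x y, f x = f y ∧ ({x, y} : Multiset α) ≤ t := by
  obtain ⟨l, rfl⟩ := Quot.exists_rep t
  rw [quot_mk_to_coe'', coe_card] at ht
  have hdup : ¬ (l.map f).Nodup := fun h =>
    (ht.trans_le (l.length_map f ▸ h.length_le_card)).false
  obtain ⟨b, hb⟩ := not_forall_not.mp (mt List.nodup_iff_sublist.mpr hdup)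
  obtain ⟨l', hl', hmap⟩ := List.sublist_map_iff.mp hb
  obtain ⟨x, y, rfl⟩ := List.length_eq_two.mp (by simpa using congrArg List.length hmap.symm)
  simp only [List.map_cons, List.map_nil, List.cons.injEq] at hmap
  exact ⟨x, y, hmap.1.symm.trans hmap.2.1, coe_le.mpr hl'.subperm⟩

section MonochromaticPairs

variable {α β : Type*} [Fintype α] [DecidableEq α] [Fintype β] [DecidableEq β] (f : α → β)

def monochromaticPairs : Finset (Sym2 α) :=
  univ.biUnion fun b => ({x | f x = b} : Finset α).sym2

theorem mk_mem_monochromaticPairs {x y : α} (h : f x = f y) :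
    s(x, y) ∈ monochromaticPairs f := by
  simp [monochromaticPairs, h]

theorem two_mul_card_monochromaticPairs_le {k : ℕ} (hk : ∀ b, #{x | f x = b} ≤ k) :
    2 * #(monochromaticPairs f) ≤ Fintype.card α * (k + 1) :=
  calc 2 * #(monochromaticPairs f) ≤ ∑ b, 2 * #({x | f x = b} : Finset α).sym2 := by
        rw [← mul_sum]; exact Nat.mul_le_mul_left 2 card_biUnion_le
    _ = ∑ b, #{x | f x = b} * (#{x | f x = b} + 1) := by
        refine sum_congr rfl fun b _ => ?_
        rw [card_sym2, mul_comm, ← Nat.add_one_mul_choose_eq _ 1, Nat.choose_one_right, mul_comm]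
    _ ≤ ∑ b, #{x | f x = b} * (k + 1) := sum_le_sum fun b _ => by gcongr; exact hk b
    _ = Fintype.card α * (k + 1) := by
        rw [← sum_mul, ← card_eq_sum_card_fiberwise (by simp), card_univ]

end MonochromaticPairs

theorem Fin.card_filter_val_mod_eq_le (n m r : ℕ) :
    #{x : Fin n | x.val % m = r} ≤ n / m + 1 :=
  calc #{x : Fin n | x.val % m = r} ≤ #(range (n / m + 1)) := by
        refine card_le_card_of_injOn (fun x => x.val / m) (fun x _ => ?_) fun x hx y hy hxy => ?_
        · simpa [Nat.lt_succ_iff] using Nat.div_le_div_right x.isLt.le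
        · simp only [coe_filter, mem_univ, true_and, Set.mem_ofPred_eq] at hx hy
          refine Fin.ext ?_
          rw [← Nat.div_add_mod x m, ← Nat.div_add_mod y m, hx, hy]
          exact congrArg (m * · + r) hxy
    _ = n / m + 1 := card_range _

/-- **Covering all size-`d` multisets by size-2 multisets.**
There is an absolute constant `C > 0` such that for all `2 ≤ d ≤ n` there exist multisets
`γ_1, …, γ_N` over `{1,…,n}`, each of size `2`, with `N ≤ n²/(2(d-1)) + C·n`, such that
every multiset of size `d` over `{1,…,n}` contains some `γ_k` as a sub-multiset. -/
theorem cover_multisets_by_pairs :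
    ∃ C : ℝ, 0 < C ∧
      ∀ d n : ℕ, 2 ≤ d → d ≤ n →
        ∃ (N : ℕ) (γ : Fin N → Multiset (Fin n)),
          (∀ k, Multiset.card (γ k) = 2) ∧
          ((N : ℝ) ≤ (n : ℝ) ^ 2 / (2 * ((d : ℝ) - 1)) + C * n) ∧
          (∀ α : Multiset (Fin n), Multiset.card α = d → ∃ k, γ k ≤ α) := by
  refine ⟨1, one_pos, fun d n hd _ => ?_⟩
  obtain ⟨m, rfl⟩ : ∃ m, d = m + 1 := ⟨d - 1, by omega⟩
  let f : Fin n → Fin m := fun x => ⟨x % m, Nat.mod_lt _ (by omega)⟩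
  let S := monochromaticPairs f
  have hS : 2 * #S ≤ n * (n / m + 2) := by
    simpa using two_mul_card_monochromaticPairs_le f fun b => by
      simpa only [f, Fin.ext_iff] using Fin.card_filter_val_mod_eq_le n m b
  refine ⟨#S, fun k => (S.equivFin.symm k : Sym2 (Fin n)).toMultiset,
    fun k => Sym2.card_toMultiset _, ?_, fun α hα => ?_⟩
  · have hdiv : ((n / m : ℕ) : ℝ) ≤ n / m := Nat.cast_div_le
    have hS' : (2 * #S : ℝ) ≤ n * ((n / m : ℕ) + 2) := by exact_mod_cast hS
    have hsq : (n : ℝ) ^ 2 / (2 * m) = n * (n / m) / 2 := by ring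
    push_cast
    rw [add_sub_cancel_right, hsq]
    nlinarith [mul_le_mul_of_nonneg_left hdiv (Nat.cast_nonneg (α := ℝ) n)]
  · obtain ⟨x, y, hxy, hle⟩ := Multiset.exists_pair_le_of_card_lt f α (by simp [hα])
    refine ⟨S.equivFin ⟨s(x, y), mk_mem_monochromaticPairs f hxy⟩, ?_⟩
    simp only [Equiv.symm_apply_apply]
    exact hle
end

section
/- Let D, d, n be integers with 3 ≤ D ≤ d ≤ n. There exist multisets γ_1, …, γ_N, each of size D with elements in {1,…,n} (repeated elements allowed), with N ≤ ((4e)^D / D)·n^D/d^{D−1}, such that every multiset of size d with elements in {1,…,n} contains at least one γ_k as a sub-multiset. -/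
/-!
Cut `{0, …, n-1}` into `t = ⌊d/D⌋` intervals of length `B = ⌊n/t⌋ + 1` and take all size-`D`
multisets supported in a single interval. By pigeonhole, a multiset of size `d ≥ tD` has at least
`D` elements (with multiplicity) in one interval, hence contains one of them. There are at most
`t · C(B+D-1, D) ≤ t · (e(B+D-1)/D)^D` of them, and `B + D - 1 ≤ 4Dn/d`, `t ≤ d/D`.
-/

open Finset Nat

theorem Multiset.exists_le_card_eq {α : Type*} {s : Multiset α} {n : ℕ} (h : n ≤ card s) :
    ∃ t ≤ s, card t = n := by
  have : powersetCard n s ≠ 0 := by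
    rw [← card_pos, card_powersetCard]
    exact Nat.choose_pos h
  obtain ⟨t, ht⟩ := Multiset.exists_mem_of_ne_zero this
  exact ⟨t, mem_powersetCard.mp ht⟩

theorem Multiset.exists_lt_count_map_of_mul_lt_card {α β : Type*} [DecidableEq β] {f : α → β}
    {m : Multiset α} {s : Finset β} {n : ℕ} (hf : ∀ a ∈ m, f a ∈ s) (h : #s * n < card m) :
    ∃ j ∈ s, n < (m.map f).count j := by
  refine exists_lt_of_sum_lt ?_
  rw [sum_const, smul_eq_mul, sum_count_eq_card, card_map]
  · exact h
  · simpa using hf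

theorem Finset.card_sym_eq_choose {α : Type*} [DecidableEq α] (s : Finset α) (k : ℕ) :
    #(s.sym k) = (#s + k - 1).choose k := by
  conv_lhs => rw [← s.attach_map_val, sym_map, card_map, attach_eq_univ, sym_univ, card_univ,
    Sym.card_sym_eq_choose, Fintype.card_coe]

section FiberSym

variable {α β : Type*} [Fintype α] [DecidableEq α] [DecidableEq β]

def fiberSym (f : α → β) (s : Finset β) (k : ℕ) : Finset (Sym α k) :=
  s.biUnion fun j => ({a | f a = j} : Finset α).sym k

theorem card_fiberSym_le {f : α → β} {s : Finset β} {B : ℕ}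
    (hB : ∀ j ∈ s, #({a | f a = j} : Finset α) ≤ B) (k : ℕ) :
    #(fiberSym f s k) ≤ #s * (B + k - 1).choose k := by
  calc #(fiberSym f s k) ≤ ∑ j ∈ s, #(({a | f a = j} : Finset α).sym k) := card_biUnion_le
    _ ≤ #s • (B + k - 1).choose k := sum_le_card_nsmul _ _ _ fun j hj => by
      rw [card_sym_eq_choose]
      exact Nat.choose_le_choose k (by have := hB j hj; omega)
    _ = #s * (B + k - 1).choose k := smul_eq_mul ..

theorem exists_mem_fiberSym_le {f : α → β} {s : Finset β} (hf : ∀ a, f a ∈ s) {k : ℕ}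
    {m : Multiset α} (hm : #s * (k - 1) < Multiset.card m) :
    ∃ γ ∈ fiberSym f s k, (γ : Multiset α) ≤ m := by
  obtain ⟨j, hjs, hj⟩ := Multiset.exists_lt_count_map_of_mul_lt_card (fun a _ => hf a) hm
  have hk : k ≤ Multiset.card (m.filter (j = f ·)) := by
    rw [← Multiset.count_map]; omega
  obtain ⟨γ, hγ, hγk⟩ := Multiset.exists_le_card_eq hk
  refine ⟨⟨γ, hγk⟩, mem_biUnion.mpr ⟨j, hjs, mem_sym_iff.mpr fun a ha => ?_⟩,
    hγ.trans (Multiset.filter_le _ _)⟩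
  simpa [eq_comm] using Multiset.of_mem_filter (Multiset.mem_of_le hγ ha)

end FiberSym

theorem Fin.card_filter_val_div_eq_le (n : ℕ) {B : ℕ} (hB : 0 < B) (j : ℕ) :
    #({x : Fin n | x.val / B = j} : Finset (Fin n)) ≤ B := by
  calc _ ≤ #(Ico (j * B) (j * B + B)) := by
        refine card_le_card_of_injOn Fin.val (fun x hx => ?_) Fin.val_injective.injOn
        have := (Nat.div_eq_iff hB).mp (by simpa using hx)
        simp only [coe_Ico, Set.mem_Ico]
        omega
    _ = B := by simp

theorem Nat.choose_le_exp_mul_div_pow (n k : ℕ) :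
    (n.choose k : ℝ) ≤ (Real.exp 1 * n / k) ^ k := by
  rcases k.eq_zero_or_pos with rfl | hk
  · simp
  have hfac : (k : ℝ) ^ k / k ! ≤ Real.exp 1 ^ k := by
    rw [← Real.exp_nat_mul, mul_one]
    exact Real.pow_div_factorial_le_exp _ k.cast_nonneg k
  calc (n.choose k : ℝ) ≤ n ^ k / k ! := Nat.choose_le_pow_div k n
    _ = (n / k) ^ k * (k ^ k / k !) := by rw [div_pow]; field_simp
    _ ≤ (n / k) ^ k * Real.exp 1 ^ k := by gcongr
    _ = (Real.exp 1 * n / k) ^ k := by ring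

theorem mul_choose_div_add_le {D d n : ℕ} (hD : 0 < D) (hDd : D ≤ d) (hdn : d ≤ n) :
    ((d / D : ℕ) * (n / (d / D) + D).choose D : ℝ)
      ≤ (4 * Real.exp 1) ^ D / D * n ^ D / d ^ (D - 1) := by
  set t := d / D
  have ht0 : 0 < t := Nat.div_pos hDd hD
  have htD : (t * D : ℝ) ≤ d := by exact_mod_cast Nat.div_mul_le_self d D
  have hdt : (d : ℝ) ≤ 2 * D * t := by
    have : d < t * D + D := Nat.lt_div_mul_add hD
    have : D ≤ t * D := Nat.le_mul_of_pos_left D ht0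
    exact_mod_cast (by nlinarith : d ≤ 2 * D * t)
  have hD' : (0 : ℝ) < D := by exact_mod_cast hD
  have hd' : (0 : ℝ) < d := by exact_mod_cast hD.trans_le hDd
  have ht' : (0 : ℝ) < t := by exact_mod_cast ht0
  have hdn' : (d : ℝ) ≤ n := by exact_mod_cast hdn
  have hM : ((n / t + D : ℕ) : ℝ) ≤ 4 * D * n / d := by
    have h1 : ((n / t : ℕ) : ℝ) ≤ 2 * D * n / d := by
      refine Nat.cast_div_le.trans ?_
      rw [div_le_div_iff₀ ht' hd']
      nlinarith
    have h2 : (D : ℝ) ≤ 2 * D * n / d := by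
      rw [le_div_iff₀ hd']
      nlinarith
    push_cast
    linarith [show 4 * (D : ℝ) * n / d = 2 * D * n / d + 2 * D * n / d by ring]
  calc (t * (n / t + D).choose D : ℝ)
      ≤ t * (Real.exp 1 * (4 * D * n / d) / D) ^ D := by
        gcongr
        refine (Nat.choose_le_exp_mul_div_pow _ _).trans ?_
        gcongr
    _ = t * (4 * Real.exp 1 * n / d) ^ D := by
        congr 2
        field_simp
    _ ≤ d / D * (4 * Real.exp 1 * n / d) ^ D := by
        gcongr
        rw [le_div_iff₀ hD']
        exact htD
    _ = (4 * Real.exp 1) ^ D / D * n ^ D / d ^ (D - 1) := by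
        obtain ⟨E, rfl⟩ : ∃ E, D = E + 1 := ⟨D - 1, by omega⟩
        rw [Nat.add_sub_cancel, div_pow, pow_succ (d : ℝ)]
        field_simp
        ring

/-- **Covering all size-`d` multisets by size-`D` multisets.**
Let `3 ≤ D ≤ d ≤ n`. There exist multisets `γ_1, …, γ_N` over `{1,…,n}`, each of size `D`,
with `N ≤ ((4e)^D / D)·n^D/d^(D-1)`, such that every multiset of size `d` over `{1,…,n}`
contains some `γ_k` as a sub-multiset. -/
theorem cover_multisets_by_size_D
    (D d n : ℕ) (hD : 3 ≤ D) (hDd : D ≤ d) (hdn : d ≤ n) :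
    ∃ (N : ℕ) (γ : Fin N → Multiset (Fin n)),
      (∀ k, Multiset.card (γ k) = D) ∧
      ((N : ℝ) ≤ (4 * Real.exp 1) ^ D / (D : ℝ) * (n : ℝ) ^ D / (d : ℝ) ^ (D - 1)) ∧
      (∀ α : Multiset (Fin n), Multiset.card α = d → ∃ k, γ k ≤ α) := by
  set t := d / D
  set B := n / t + 1
  have ht : 0 < t := Nat.div_pos hDd (by omega)
  have hB : 0 < B := Nat.succ_pos _
  have hblock : ∀ x : Fin n, x.val / B ∈ range t := fun x =>
    mem_range.mpr <| (Nat.div_lt_iff_lt_mul hB).mpr <|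
      x.isLt.trans (Nat.lt_mul_div_succ n ht)
  set G := fiberSym (fun x : Fin n => x.val / B) (range t) D
  refine ⟨#G, fun k => (G.equivFin.symm k : Sym (Fin n) D), fun _ => Sym.card_coe, ?_, ?_⟩
  · have hG : #G ≤ t * (n / t + D).choose D := by
      simpa [show B + D - 1 = n / t + D by omega] using
        card_fiberSym_le (s := range t) (fun j _ => Fin.card_filter_val_div_eq_le n hB j) D
    exact (Nat.cast_le.mpr hG).trans (by exact_mod_cast mul_choose_div_add_le (by omega) hDd hdn)
  · intro α hα
    have hcard : #(range t) * (D - 1) < Multiset.card α := by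
      rw [card_range, hα]
      have : t * D ≤ d := Nat.div_mul_le_self d D
      rw [Nat.mul_sub_one]
      omega
    obtain ⟨γ, hγG, hγα⟩ := exists_mem_fiberSym_le hblock hcard
    exact ⟨G.equivFin ⟨γ, hγG⟩, by simpa using hγα⟩
end

section
/- Let M and A be real symmetric N × N matrices such that M·A = 0 (the zero matrix). If M − A is positive semidefinite, then M is positive semidefinite. -/
open Matrix
open scoped ComplexOrder

namespace Matrix

variable {n 𝕜 : Type*} [Fintype n] [RCLike 𝕜] {M A : Matrix n n 𝕜}

/-- Since `M * A = 0`, the range of `A` lies in `ker M`, which for Hermitian `M` is orthogonal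
to every eigenvector of `M` with nonzero eigenvalue. -/
lemma IsHermitian.star_dotProduct_mulVec_eq_zero_of_mul_eq_zero (hM : M.IsHermitian)
    (h : M * A = 0) {v : n → 𝕜} {μ : ℝ} (hv : M *ᵥ v = μ • v) (hμ : μ ≠ 0) :
    star v ⬝ᵥ (A *ᵥ v) = 0 := by
  have hMv : star (M *ᵥ v) ⬝ᵥ (A *ᵥ v) = 0 := by
    rw [star_mulVec, ← dotProduct_mulVec, mulVec_mulVec, hM.eq, h, zero_mulVec, dotProduct_zero]
  rw [hv, star_smul, star_trivial, smul_dotProduct] at hMv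
  exact (smul_eq_zero.mp hMv).resolve_left hμ

lemma IsHermitian.posSemidef_of_sub_posSemidef_of_mul_eq_zero (hM : M.IsHermitian)
    (h : M * A = 0) (hMA : (M - A).PosSemidef) : M.PosSemidef := by
  classical
  refine hM.posSemidef_iff_eigenvalues_nonneg.mpr fun i => ?_
  rcases eq_or_ne (hM.eigenvalues i) 0 with hzero | hne
  · exact hzero.ge
  · have hq := hMA.re_dotProduct_nonneg (hM.eigenvectorBasis i)
    rwa [sub_mulVec, dotProduct_sub, hM.star_dotProduct_mulVec_eq_zero_of_mul_eq_zero h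
      (hM.mulVec_eigenvectorBasis i) hne, sub_zero, ← hM.eigenvalues_eq] at hq

end Matrix

/-- **Killing a null-space component preserves positive semidefiniteness.**
If `M` and `A` are real symmetric `N × N` matrices with `M·A = 0` and `M - A` is positive
semidefinite, then `M` is positive semidefinite. -/
theorem posSemidef_of_sub_posSemidef_of_mul_eq_zero
    (N : ℕ) (M A : Matrix (Fin N) (Fin N) ℝ)
    (hM : M.IsSymm)
    (h : M * A = 0) (hMA : (M - A).PosSemidef) :
    M.PosSemidef :=
  (isHermitian_iff_isSymm.mpr hM).posSemidef_of_sub_posSemidef_of_mul_eq_zero h hMA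
end

section
/- Let h_k denote the probabilists' Hermite polynomials and let γ be the standard Gaussian measure on ℝ. For all k, ℓ ∈ ℕ and all c ∈ [0,1]: if ℓ ≤ k and k ≡ ℓ (mod 2), then ∫ h_k(c·g)·h_ℓ(g) dγ(g) = c^ℓ · (k! / ((k−ℓ)/2)!) · (−(1−c²)/2)^{(k−ℓ)/2}; otherwise (if ℓ > k or k and ℓ have different parities) ∫ h_k(c·g)·h_ℓ(g) dγ(g) = 0. -/
/-!
For a standard Gaussian `g`, integration by parts `E[g f(g)] = E[f'(g)]` combined with
`h_{l+1} = X h_l - h_l'` gives `E[q(g) h_{l+1}(g)] = E[q'(g) h_l(g)]` for every polynomial `q`, hence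
`E[q(g) h_l(g)] = E[q⁽ˡ⁾(g)]`. Since `h_k' = k h_{k-1}`, for `q = h_k(c ·)` this equals
`c^l k!/(k-l)! E[h_{k-l}(c g)]`, and it vanishes when `l > k`. The same integration by parts turns
the three-term recurrence into `E[h_{n+2}(c g)] = (n+1)(c² - 1) E[h_n(c g)]`, so `E[h_n(c g)]`
vanishes for odd `n` and equals `(2m)!/m! ((c² - 1)/2)^m` for `n = 2m`.
-/

open MeasureTheory ProbabilityTheory

/-- The probabilists' Hermite polynomials (as real functions):
`h_0 = 1`, `h_1 = x`, `h_{k+1}(x) = x·h_k(x) - k·h_{k-1}(x)`. -/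
noncomputable def hermiteFn : ℕ → ℝ → ℝ
  | 0 => fun _ => 1
  | 1 => fun x => x
  | (k + 2) => fun x => x * hermiteFn (k + 1) x - (k + 1) * hermiteFn k x

open Polynomial Real NNReal

namespace Polynomial

theorem derivative_hermite : ∀ n : ℕ, derivative (hermite n) = n * hermite (n - 1)
  | 0 => by simp
  | n + 1 => by
    rw [hermite_succ, derivative_sub, derivative_mul, derivative_X, derivative_hermite n]
    rcases n with _ | n
    · simp
    · simp only [derivative_mul, derivative_natCast, Nat.add_sub_cancel, hermite_succ n]
      push_cast
      ring

theorem hermite_add_two (n : ℕ) :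
    hermite (n + 2) = X * hermite (n + 1) - (n + 1 : ℤ[X]) * hermite n := by
  rw [hermite_succ, derivative_hermite]
  simp

theorem iterate_derivative_hermite (k l : ℕ) :
    derivative^[l] (hermite k) = (k.descFactorial l : ℤ[X]) * hermite (k - l) := by
  induction l with
  | zero => simp
  | succ l ih =>
    rw [Function.iterate_succ_apply', ih, derivative_mul, derivative_natCast, zero_mul, zero_add,
      derivative_hermite, Nat.descFactorial_succ, Nat.sub_sub]
    push_cast
    ring

theorem iterate_derivative_comp_C_mul_X {R : Type*} [CommSemiring R] (a : R) (p : R[X]) (n : ℕ) :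
    derivative^[n] (p.comp (C a * X)) = C a ^ n * (derivative^[n] p).comp (C a * X) := by
  induction n generalizing p with
  | zero => simp
  | succ n ih =>
    rw [Function.iterate_succ_apply, derivative_comp, derivative_C_mul_X,
      iterate_derivative_C_mul, ih, Function.iterate_succ_apply]
    ring

end Polynomial

theorem hermiteFn_eq_aeval : ∀ (k : ℕ) (x : ℝ), hermiteFn k x = aeval x (hermite k)
  | 0, x => by simp [hermiteFn]
  | 1, x => by simp [hermiteFn]
  | k + 2, x => by
    simp only [hermiteFn, hermiteFn_eq_aeval (k + 1) x, hermiteFn_eq_aeval k x, hermite_add_two]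
    simp

namespace ProbabilityTheory

theorem hasDerivAt_gaussianPDFReal_zero_one (x : ℝ) :
    HasDerivAt (gaussianPDFReal 0 1) (-x * gaussianPDFReal 0 1 x) x := by
  have h := (((hasDerivAt_pow 2 x).fun_neg.div_const 2).exp).const_mul (√(2 * π))⁻¹
  simp only [gaussianPDFReal_def, NNReal.coe_one, mul_one, sub_zero]
  exact h.congr_deriv (by norm_num; ring)

theorem integrable_gaussianPDFReal_mul_iff {f : ℝ → ℝ} :
    Integrable (fun x ↦ gaussianPDFReal 0 1 x * f x) ↔ Integrable f (gaussianReal 0 1) := by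
  rw [gaussianReal_of_var_ne_zero 0 one_ne_zero, integrable_withDensity_iff_integrable_smul'
    (measurable_gaussianPDF 0 1) (ae_of_all _ fun _ ↦ gaussianPDF_lt_top)]
  simp [toReal_gaussianPDF]

theorem integral_mul_gaussianReal_eq_integral_deriv {f f' : ℝ → ℝ}
    (hf : ∀ x, HasDerivAt f (f' x) x) (hfi : Integrable f (gaussianReal 0 1))
    (hf'i : Integrable f' (gaussianReal 0 1))
    (hxfi : Integrable (fun x ↦ x * f x) (gaussianReal 0 1)) :
    ∫ x, x * f x ∂gaussianReal 0 1 = ∫ x, f' x ∂gaussianReal 0 1 := by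
  rw [← integrable_gaussianPDFReal_mul_iff] at hfi hf'i hxfi
  have h := integral_eq_zero_of_hasDerivAt_of_integrable
    (f' := fun x ↦ gaussianPDFReal 0 1 x * f' x - gaussianPDFReal 0 1 x * (x * f x))
    (fun x ↦ ((hasDerivAt_gaussianPDFReal_zero_one x).mul (hf x)).congr_deriv (by ring))
    (hf'i.sub hxfi) hfi
  simp only [integral_gaussianReal_eq_integral_smul one_ne_zero, smul_eq_mul]
  rw [integral_sub hf'i hxfi, sub_eq_zero] at h
  exact h.symm

theorem integrable_eval_gaussianReal (μ : ℝ) (v : ℝ≥0) (p : ℝ[X]) :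
    Integrable (fun x ↦ p.eval x) (gaussianReal μ v) := by
  induction p using Polynomial.induction_on' with
  | add p q hp hq => simpa only [eval_add] using hp.fun_add hq
  | monomial n a =>
    have hpow : Integrable (fun x : ℝ ↦ x ^ n) (gaussianReal μ v) :=
      (memLp_id_gaussianReal n).integrable_norm_pow'.mono' (by fun_prop)
        (ae_of_all _ fun x ↦ by simp [norm_pow])
    simpa only [eval_monomial] using hpow.const_mul a

noncomputable def gaussianPolyIntegral (μ : ℝ) (v : ℝ≥0) : ℝ[X] →ₗ[ℝ] ℝ where
  toFun p := ∫ x, p.eval x ∂gaussianReal μ v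
  map_add' p q := by
    simp only [eval_add]
    exact integral_add (integrable_eval_gaussianReal μ v p) (integrable_eval_gaussianReal μ v q)
  map_smul' r p := by
    simp only [eval_smul, smul_eq_mul, RingHom.id_apply]
    exact integral_const_mul r _

theorem gaussianPolyIntegral_apply (μ : ℝ) (v : ℝ≥0) (p : ℝ[X]) :
    gaussianPolyIntegral μ v p = ∫ x, p.eval x ∂gaussianReal μ v := rfl

theorem gaussianPolyIntegral_one (μ : ℝ) (v : ℝ≥0) : gaussianPolyIntegral μ v 1 = 1 := by
  simp [gaussianPolyIntegral_apply]

theorem gaussianPolyIntegral_C_mul (μ : ℝ) (v : ℝ≥0) (a : ℝ) (p : ℝ[X]) :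
    gaussianPolyIntegral μ v (C a * p) = a * gaussianPolyIntegral μ v p := by
  rw [← smul_eq_C_mul, map_smul, smul_eq_mul]

theorem gaussianPolyIntegral_X_mul (p : ℝ[X]) :
    gaussianPolyIntegral 0 1 (X * p) = gaussianPolyIntegral 0 1 (derivative p) := by
  simp only [gaussianPolyIntegral_apply, eval_mul, eval_X]
  exact integral_mul_gaussianReal_eq_integral_deriv (fun x ↦ p.hasDerivAt x)
    (integrable_eval_gaussianReal 0 1 p) (integrable_eval_gaussianReal 0 1 _)
    (by convert integrable_eval_gaussianReal 0 1 (X * p) using 2; simp)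

local notation "He" n:max => Polynomial.map (algebraMap ℤ ℝ) (hermite n)

theorem gaussianPolyIntegral_mul_hermite_succ (q : ℝ[X]) (n : ℕ) :
    gaussianPolyIntegral 0 1 (q * He (n + 1)) = gaussianPolyIntegral 0 1 (derivative q * He n) := by
  have h := gaussianPolyIntegral_X_mul (q * He n)
  rw [derivative_mul, map_add] at h
  rw [hermite_succ, Polynomial.map_sub, Polynomial.map_mul, map_X, ← derivative_map, mul_sub,
    map_sub, mul_left_comm, h, add_sub_cancel_right]

theorem gaussianPolyIntegral_mul_hermite (q : ℝ[X]) (n : ℕ) :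
    gaussianPolyIntegral 0 1 (q * He n) = gaussianPolyIntegral 0 1 (derivative^[n] q) := by
  induction n generalizing q with
  | zero => simp
  | succ n ih => rw [gaussianPolyIntegral_mul_hermite_succ, ih, Function.iterate_succ_apply]

theorem gaussianPolyIntegral_hermite_comp_mul_hermite (c : ℝ) (k l : ℕ) :
    gaussianPolyIntegral 0 1 ((He k).comp (C c * X) * He l) =
      c ^ l * k.descFactorial l * gaussianPolyIntegral 0 1 ((He (k - l)).comp (C c * X)) := by
  rw [gaussianPolyIntegral_mul_hermite, iterate_derivative_comp_C_mul_X, iterate_derivative_map,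
    iterate_derivative_hermite, Polynomial.map_mul, Polynomial.map_natCast, mul_comp, natCast_comp,
    ← mul_assoc, ← C_pow, ← map_natCast C, ← C_mul, gaussianPolyIntegral_C_mul]

theorem gaussianPolyIntegral_hermite_comp_add_two (c : ℝ) (n : ℕ) :
    gaussianPolyIntegral 0 1 ((He (n + 2)).comp (C c * X)) =
      (n + 1) * (c ^ 2 - 1) * gaussianPolyIntegral 0 1 ((He n).comp (C c * X)) := by
  have hcomp : (He (n + 2)).comp (C c * X) =
      C c * ((He (n + 1)).comp (C c * X) * He 1) - C ((n : ℝ) + 1) * (He n).comp (C c * X) := by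
    rw [hermite_add_two, hermite_one]
    simp only [Polynomial.map_sub, Polynomial.map_mul, map_X, Polynomial.map_add,
      Polynomial.map_natCast, Polynomial.map_one, sub_comp, mul_comp, X_comp, add_comp,
      natCast_comp, one_comp, C_add, C_1, map_natCast]
    ring
  rw [hcomp, map_sub, gaussianPolyIntegral_C_mul, gaussianPolyIntegral_hermite_comp_mul_hermite,
    gaussianPolyIntegral_C_mul, Nat.descFactorial_one, Nat.add_sub_cancel]
  push_cast
  ring

theorem gaussianPolyIntegral_hermite_comp_odd (c : ℝ) (m : ℕ) :
    gaussianPolyIntegral 0 1 ((He (2 * m + 1)).comp (C c * X)) = 0 := by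
  induction m with
  | zero =>
    rw [hermite_one, map_X, X_comp, gaussianPolyIntegral_C_mul, ← mul_one (X : ℝ[X]),
      gaussianPolyIntegral_X_mul, derivative_one, map_zero, mul_zero]
  | succ m ih =>
    rw [show 2 * (m + 1) + 1 = 2 * m + 1 + 2 by ring, gaussianPolyIntegral_hermite_comp_add_two,
      ih, mul_zero]

theorem gaussianPolyIntegral_hermite_comp_even (c : ℝ) (m : ℕ) :
    gaussianPolyIntegral 0 1 ((He (2 * m)).comp (C c * X)) =
      (2 * m).factorial / m.factorial * ((c ^ 2 - 1) / 2) ^ m := by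
  induction m with
  | zero => simp [gaussianPolyIntegral_one]
  | succ m ih =>
    rw [show 2 * (m + 1) = 2 * m + 2 by ring, gaussianPolyIntegral_hermite_comp_add_two, ih,
      Nat.factorial_succ, Nat.factorial_succ, Nat.factorial_succ]
    push_cast
    field_simp
    ring

theorem integral_hermiteFn_mul_hermiteFn_gaussianReal (c : ℝ) (k l : ℕ) :
    ∫ g, hermiteFn k (c * g) * hermiteFn l g ∂gaussianReal 0 1 =
      c ^ l * k.descFactorial l * gaussianPolyIntegral 0 1 ((He (k - l)).comp (C c * X)) := by
  rw [← gaussianPolyIntegral_hermite_comp_mul_hermite, gaussianPolyIntegral_apply]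
  simp only [eval_mul, eval_comp, eval_C, eval_X, eval_map_algebraMap, hermiteFn_eq_aeval]

end ProbabilityTheory

theorem scaled_hermite_gaussian_coefficient_general
    (k l : ℕ) (c : ℝ) :
    ((l ≤ k ∧ k % 2 = l % 2) →
      (∫ g, hermiteFn k (c * g) * hermiteFn l g ∂(gaussianReal 0 1)) =
        c ^ l * ((k.factorial : ℝ) / (((k - l) / 2).factorial : ℝ)) *
          (-((1 - c ^ 2) / 2)) ^ ((k - l) / 2)) ∧
    (¬ (l ≤ k ∧ k % 2 = l % 2) →
      (∫ g, hermiteFn k (c * g) * hermiteFn l g ∂(gaussianReal 0 1)) = 0) := by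
  rw [integral_hermiteFn_mul_hermiteFn_gaussianReal]
  refine ⟨fun ⟨hle, hpar⟩ ↦ ?_, fun h ↦ ?_⟩
  · obtain ⟨m, hm⟩ : ∃ m, k - l = 2 * m := ⟨(k - l) / 2, by omega⟩
    have hfac : (k.descFactorial l : ℝ) * (2 * m).factorial = k.factorial := by
      rw [← hm, mul_comm]
      exact_mod_cast Nat.factorial_mul_descFactorial hle
    rw [hm, gaussianPolyIntegral_hermite_comp_even, Nat.mul_div_cancel_left m two_pos, ← hfac]
    field_simp
    ring
  · by_cases hle : l ≤ k
    · obtain ⟨m, hm⟩ : ∃ m, k - l = 2 * m + 1 := ⟨(k - l) / 2, by omega⟩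
      rw [hm, gaussianPolyIntegral_hermite_comp_odd, mul_zero]
    · rw [Nat.descFactorial_eq_zero_iff_lt.mpr (not_le.mp hle)]
      simp

/-- **Gaussian inner product of a scaled Hermite polynomial with a Hermite polynomial.**
For `c ∈ [0,1]`: if `ℓ ≤ k` and `k ≡ ℓ (mod 2)` then
`∫ h_k(c·g)·h_ℓ(g) dγ(g) = c^ℓ · (k!/((k-ℓ)/2)!) · (-(1-c²)/2)^((k-ℓ)/2)`,
and otherwise the integral vanishes. -/
theorem scaled_hermite_gaussian_coefficient
    (k l : ℕ) (c : ℝ) (hc0 : 0 ≤ c) (hc1 : c ≤ 1) :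
    ((l ≤ k ∧ k % 2 = l % 2) →
      (∫ g, hermiteFn k (c * g) * hermiteFn l g ∂(gaussianReal 0 1)) =
        c ^ l * ((k.factorial : ℝ) / (((k - l) / 2).factorial : ℝ)) *
          (-((1 - c ^ 2) / 2)) ^ ((k - l) / 2)) ∧
    (¬ (l ≤ k ∧ k % 2 = l % 2) →
      (∫ g, hermiteFn k (c * g) * hermiteFn l g ∂(gaussianReal 0 1)) = 0) :=
  scaled_hermite_gaussian_coefficient_general k l c
end

section
/- Let e, n be positive integers with e ≤ n. The number of functions α : {1,…,n} × {1,…,n} → ℕ with Σ_{i,j} α(i,j) = e such that for every i ∈ {1,…,n} the quantity Σ_{j=1}^n (α(i,j) + α(j,i)) is even, is at most (8n)^e. -/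
/-!
Every nonzero multigraph with all degrees even contains a nonempty closed walk: a longest trail
from a non-isolated vertex must end where it started, since otherwise its endpoint has odd degree
in the trail and even degree in the graph, so the trail could be extended. Removing a closed walk
of length `m ≥ 1` leaves an even multigraph with `e - m` edges, and closed walks of length `m` are
described by `m` steps (a direction and a vertex). Hence the number `N e` of even multigraphs with
`e` edges on `n` vertices satisfies `N e ≤ ∑_{m=1}^{e} (2n)^m N (e - m)`, and `N e ≤ (4n)^e`
follows by strong induction and a geometric sum.
-/

open Finset

namespace Multigraph

variable {V : Type*}

section Degree

variable [Fintype V]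

abbrev degree (α : V × V → ℕ) (i : V) : ℕ := ∑ j, (α (i, j) + α (j, i))

theorem degree_add (α β : V × V → ℕ) (i : V) :
    degree (α + β) i = degree α i + degree β i := by
  simp only [degree, Pi.add_apply, ← sum_add_distrib]
  exact sum_congr rfl fun _ _ => by ring

theorem degree_mono {α β : V × V → ℕ} (h : α ≤ β) (i : V) : degree α i ≤ degree β i :=
  sum_le_sum fun _ _ => add_le_add (h _) (h _)

end Degree

def orient (b : Bool) (u v : V) : V × V := bif b then (u, v) else (v, u)

def walkEnd : V → List (Bool × V) → V
  | u, [] => u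
  | _, (_, v) :: l => walkEnd v l

theorem walkEnd_append_singleton (u : V) (l : List (Bool × V)) (x : Bool × V) :
    walkEnd u (l ++ [x]) = x.2 := by
  induction l generalizing u with
  | nil => simp [walkEnd]
  | cons y l ih => simp [walkEnd, ih]

section Walk

variable [DecidableEq V]

/-- A step `(b, v)` of a walk moves from the current vertex `c` to `v` along the edge
`orient b c v`, that is `(c, v)` if `b` and `(v, c)` otherwise. -/
def walkGraph : V → List (Bool × V) → V × V → ℕ
  | _, [] => 0
  | u, (b, v) :: l => Pi.single (orient b u v) 1 + walkGraph v l

/-- The closed walk `x :: l` starts at `x.2` and returns there by the step `x`: indexing closed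
walks by their step list alone is what makes those of length `m` number at most `(2 |V|) ^ m`. -/
def closedWalkGraph : List (Bool × V) → V × V → ℕ
  | [] => 0
  | x :: l => walkGraph x.2 (l ++ [x])

theorem walkGraph_append_singleton (u : V) (l : List (Bool × V)) (b : Bool) (v : V) :
    walkGraph u (l ++ [(b, v)]) = walkGraph u l + Pi.single (orient b (walkEnd u l) v) 1 := by
  induction l generalizing u with
  | nil => simp [walkGraph, walkEnd]
  | cons x l ih => simp [walkGraph, walkEnd, ih, add_assoc]

variable [Fintype V]

theorem sum_walkGraph (u : V) (l : List (Bool × V)) : ∑ p, walkGraph u l p = l.length := by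
  induction l generalizing u with
  | nil => simp [walkGraph]
  | cons x l ih => simp [walkGraph, sum_add_distrib, ih, add_comm]

theorem sum_closedWalkGraph (l : List (Bool × V)) : ∑ p, closedWalkGraph l p = l.length := by
  cases l with
  | nil => simp [closedWalkGraph]
  | cons x l => simp [closedWalkGraph, sum_walkGraph]

theorem degree_single_orient (b : Bool) (u v i : V) :
    degree (Pi.single (orient b u v) 1) i =
      (if u = i then 1 else 0) + (if v = i then 1 else 0) := by
  cases b <;>
    simp [degree, orient, Pi.single_apply, sum_add_distrib, Prod.ext_iff, ite_and, eq_comm, add_comm]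

theorem even_degree_walkGraph_iff (u : V) (l : List (Bool × V)) (i : V) :
    Even (degree (walkGraph u l) i) ↔ (u = i ↔ walkEnd u l = i) := by
  induction l generalizing u with
  | nil => simp [walkGraph, walkEnd, degree]
  | cons x l ih =>
    obtain ⟨b, v⟩ := x
    rw [walkGraph, walkEnd, degree_add, Nat.even_add, ih, degree_single_orient]
    by_cases hu : u = i <;> by_cases hv : v = i <;> simp [hu, hv]

theorem even_degree_closedWalkGraph (l : List (Bool × V)) (i : V) :
    Even (degree (closedWalkGraph l) i) := by
  cases l with
  | nil => simp [closedWalkGraph, degree]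
  | cons x l => simp [closedWalkGraph, even_degree_walkGraph_iff, walkEnd_append_singleton]

theorem exists_add_single_orient_le {α β : V × V → ℕ} (hβ : β ≤ α) {u : V}
    (hu : degree β u < degree α u) : ∃ b v, β + Pi.single (orient b u v) 1 ≤ α := by
  obtain ⟨v, -, hv⟩ := exists_lt_of_sum_lt hu
  have key : ∀ p, β p < α p → β + Pi.single p 1 ≤ α := fun p hp q => by
    by_cases hq : q = p
    · subst hq; simpa using hp
    · simpa [hq] using hβ q
  by_cases h : β (u, v) < α (u, v)
  · exact ⟨true, v, key (u, v) h⟩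
  · exact ⟨false, v, key (v, u) (by omega)⟩

theorem exists_closedWalkGraph_le {α : V × V → ℕ} (hα : ∀ i, Even (degree α i)) (h0 : α ≠ 0) :
    ∃ l ≠ [], closedWalkGraph l ≤ α := by
  obtain ⟨⟨u, w⟩, hp⟩ : ∃ p, α p ≠ 0 := by
    by_contra! h
    exact h0 (funext h)
  have hu : 0 < degree α u :=
    calc 0 < α (u, w) + α (w, u) := by omega
      _ ≤ degree α u := single_le_sum (f := fun j => α (u, j) + α (j, u)) (by simp) (mem_univ w)
  by_contra! hclosed
  -- With no closed walk inside `α`, a nonempty trail from `u` ends at some `v ≠ u`, where it has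
  -- odd degree and `α` has even degree; so some edge at `v` is still unused.
  have extend : ∀ l, walkGraph u l ≤ α → ∃ x, walkGraph u (l ++ [x]) ≤ α := by
    intro l hl
    have hlt : degree (walkGraph u l) (walkEnd u l) < degree α (walkEnd u l) := by
      rcases l.eq_nil_or_concat with rfl | ⟨l₀, x, rfl⟩
      · simpa [walkGraph, walkEnd, degree] using hu
      · rw [List.concat_eq_append] at hl ⊢
        have hne : x.2 ≠ u := fun h =>
          hclosed (x :: l₀) (List.cons_ne_nil _ _) (by rwa [closedWalkGraph, h])
        have hodd : ¬ Even (degree (walkGraph u (l₀ ++ [x])) x.2) := by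
          simp [even_degree_walkGraph_iff, walkEnd_append_singleton, hne.symm]
        rw [walkEnd_append_singleton]
        exact lt_of_le_of_ne (degree_mono hl _) fun h => hodd (h ▸ hα _)
    obtain ⟨b, v, hbv⟩ := exists_add_single_orient_le hl hlt
    exact ⟨(b, v), by rwa [walkGraph_append_singleton]⟩
  have trail : ∀ m, ∃ l : List (Bool × V), l.length = m ∧ walkGraph u l ≤ α := by
    intro m
    induction m with
    | zero => exact ⟨[], rfl, by simp [walkGraph]⟩
    | succ m ih =>
      obtain ⟨l, hlen, hl⟩ := ih
      obtain ⟨x, hx⟩ := extend l hl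
      exact ⟨l ++ [x], by simp [hlen], hx⟩
  obtain ⟨l, hlen, hl⟩ := trail (∑ p, α p + 1)
  have := sum_le_sum fun p (_ : p ∈ univ) => hl p
  rw [sum_walkGraph, hlen] at this
  omega

end Walk

section Counting

variable (V) [Fintype V] [DecidableEq V]

def evenGraphs (e : ℕ) : Finset (V × V → ℕ) :=
  {α ∈ Fintype.piFinset fun _ => range (e + 1) | ∑ p, α p = e ∧ ∀ i, Even (degree α i)}

variable {V}

theorem mem_evenGraphs {e : ℕ} {α : V × V → ℕ} :
    α ∈ evenGraphs V e ↔ ∑ p, α p = e ∧ ∀ i, Even (degree α i) := by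
  simp only [evenGraphs, mem_filter, Fintype.mem_piFinset, mem_range, and_iff_right_iff_imp]
  rintro ⟨rfl, -⟩ p
  exact Nat.lt_succ_of_le (single_le_sum (fun _ _ => Nat.zero_le _) (mem_univ p))

theorem evenGraphs_subset_biUnion {e : ℕ} (he : 0 < e) :
    evenGraphs V e ⊆ (range e).biUnion fun j =>
      (univ : Finset (List.Vector (Bool × V) (e - j))).biUnion fun w =>
        (evenGraphs V j).image (· + closedWalkGraph w.toList) := by
  intro α hα
  obtain ⟨hsum, heven⟩ := mem_evenGraphs.1 hα
  obtain ⟨l, hl, hle⟩ := exists_closedWalkGraph_le heven (by rintro rfl; simp at hsum; omega)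
  have hlen : l.length ≤ e := by
    rw [← hsum, ← sum_closedWalkGraph]
    exact sum_le_sum fun p _ => hle p
  have hpos : 0 < l.length := List.length_pos_of_ne_nil hl
  have hdecomp : α - closedWalkGraph l + closedWalkGraph l = α := tsub_add_cancel_of_le hle
  simp only [mem_biUnion, mem_univ, true_and, mem_image, mem_range]
  refine ⟨e - l.length, by omega, ⟨l, by omega⟩, α - closedWalkGraph l,
    mem_evenGraphs.2 ⟨?_, fun i => ?_⟩, hdecomp⟩
  · have := congrArg (fun γ => ∑ p, γ p) hdecomp
    simp only [Pi.add_apply, sum_add_distrib, sum_closedWalkGraph, hsum] at this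
    omega
  · have := heven i
    rw [← hdecomp, degree_add, Nat.even_add] at this
    exact this.2 (even_degree_closedWalkGraph l i)

theorem sum_pow_mul_pow_le {a b : ℕ} (hba : b ≤ a) (e : ℕ) :
    ∑ j ∈ range e, b ^ (e - j) * (a + b) ^ j ≤ (a + b) ^ e :=
  calc ∑ j ∈ range e, b ^ (e - j) * (a + b) ^ j
      = (∑ j ∈ range e, (a + b) ^ j * b ^ (e - 1 - j)) * b := by
        rw [sum_mul]
        refine sum_congr rfl fun j hj => ?_
        rw [show e - j = e - 1 - j + 1 by simp at hj; omega, pow_succ]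
        ring
    _ ≤ (∑ j ∈ range e, (a + b) ^ j * b ^ (e - 1 - j)) * a + b ^ e :=
        le_add_right (Nat.mul_le_mul_left _ hba)
    _ = (a + b) ^ e := geom_sum₂_mul_add a b e

theorem card_evenGraphs_le (e : ℕ) : #(evenGraphs V e) ≤ (4 * Fintype.card V) ^ e := by
  induction e using Nat.strong_induction_on with
  | _ e ih =>
    rcases Nat.eq_zero_or_pos e with rfl | he
    · rw [pow_zero, card_le_one]
      intro α hα β hβ
      simp only [mem_evenGraphs, sum_eq_zero_iff, mem_univ, true_implies] at hα hβ
      exact funext fun p => (hα.1 p).trans (hβ.1 p).symm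
    set N := Fintype.card V
    calc #(evenGraphs V e)
        ≤ ∑ j ∈ range e, ∑ w : List.Vector (Bool × V) (e - j),
            #((evenGraphs V j).image (· + closedWalkGraph w.toList)) :=
          (card_le_card (evenGraphs_subset_biUnion he)).trans
            (card_biUnion_le.trans (sum_le_sum fun j _ => card_biUnion_le))
      _ ≤ ∑ j ∈ range e, (2 * N) ^ (e - j) * (2 * N + 2 * N) ^ j := by
          refine sum_le_sum fun j hj => ?_
          calc _ ≤ ∑ w : List.Vector (Bool × V) (e - j), (4 * N) ^ j :=
                sum_le_sum fun w _ => card_image_le.trans (ih j (mem_range.1 hj))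
            _ = _ := by
              rw [sum_const, card_univ, card_vector, Fintype.card_prod, Fintype.card_bool, smul_eq_mul]
              ring
      _ ≤ (2 * N + 2 * N) ^ e := sum_pow_mul_pow_le le_rfl e
      _ = (4 * N) ^ e := by ring

theorem coe_evenGraphs (e : ℕ) :
    (evenGraphs V e : Set (V × V → ℕ)) = {α | ∑ p, α p = e ∧ ∀ i, Even (degree α i)} :=
  Set.ext fun _ => mem_evenGraphs

end Counting

end Multigraph

theorem count_even_degree_multigraphs_general (e n : ℕ) :
    {α : Fin n × Fin n → ℕ |
        (∑ p : Fin n × Fin n, α p) = e ∧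
        ∀ i : Fin n, Even (∑ j : Fin n, (α (i, j) + α (j, i)))}.Finite ∧
    {α : Fin n × Fin n → ℕ |
        (∑ p : Fin n × Fin n, α p) = e ∧
        ∀ i : Fin n, Even (∑ j : Fin n, (α (i, j) + α (j, i)))}.ncard ≤ (8 * n) ^ e := by
  rw [← Multigraph.coe_evenGraphs, Set.ncard_coe_finset]
  refine ⟨finite_toSet _, (Multigraph.card_evenGraphs_le e).trans ?_⟩
  rw [Fintype.card_fin]
  exact Nat.pow_le_pow_left (by omega) e

/-- **Counting directed multigraphs with all degrees even.**
For `0 < e ≤ n`, the number of functions `α : {1,…,n}² → ℕ` with total edge count `e` such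
that every vertex has even total degree (self-loops counted twice) is at most `(8n)^e`. -/
theorem count_even_degree_multigraphs (e n : ℕ) (he : 0 < e) (hen : e ≤ n) :
    {α : Fin n × Fin n → ℕ |
        (∑ p : Fin n × Fin n, α p) = e ∧
        ∀ i : Fin n, Even (∑ j : Fin n, (α (i, j) + α (j, i)))}.Finite ∧
    {α : Fin n × Fin n → ℕ |
        (∑ p : Fin n × Fin n, α p) = e ∧
        ∀ i : Fin n, Even (∑ j : Fin n, (α (i, j) + α (j, i)))}.ncard ≤ (8 * n) ^ e :=
  count_even_degree_multigraphs_general e n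
end

section
/- There is an absolute constant C > 0 such that the following holds for all integers D > 2 and e, n ≥ 1 with D·e ≤ 2n. If D·e is even, then the number of functions α : {1,…,n}^D → ℕ with Σ_t α(t) = e such that for every i ∈ {1,…,n} the total degree Σ_t α(t)·(number of coordinates of the tuple t equal to i) is even, is at most (C·D·n)^{D·e/2} · e^{(D/2 − 1)·e}. If D·e is odd, there are no such functions. -/
/-!
Write `α = γ + 2β` with `γ = α mod 2`. The support of `γ` is a simple hypergraph with `f` edges
and even degrees, and `β` is a multiset of `(e - f) / 2` edges, so there are at most
`n ^ (D * ((e - f) / 2))` choices for it. Listing the edges of `γ` in each of the `f!` orders and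
concatenating them gives `f!` distinct words of length `D * f` over `Fin n` in which every
letter occurs an even number of times. Such a word is determined by the position of a further
occurrence of its first letter, that letter, and the even word left after deleting both
occurrences, so there are at most `(D * f * n) ^ (D * f / 2)` of them. Finally
`f ^ f ≤ 3 ^ f * f!` turns `(D * f * n) ^ (D * f / 2) / f!` into at most
`3 ^ f * (D * n) ^ (D * f / 2) * f ^ ((D - 2) * f / 2)`.
-/

open Finset
open scoped Nat

section EvenCounts

variable {ι ι' α : Type*} [Fintype ι] [Fintype ι'] [DecidableEq α]

def EvenCounts (w : ι → α) : Prop :=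
  ∀ a, Even #{i | w i = a}

instance [Fintype α] : DecidablePred (EvenCounts : (ι → α) → Prop) :=
  fun _ => inferInstanceAs (Decidable (∀ _, _))

theorem sum_card_filter_eq_card [Fintype α] (w : ι → α) :
    ∑ a, #{i | w i = a} = Fintype.card ι :=
  (card_eq_sum_card_fiberwise fun i _ => mem_univ (w i)).symm

theorem EvenCounts.even_card [Fintype α] {w : ι → α} (hw : EvenCounts w) :
    Even (Fintype.card ι) :=
  sum_card_filter_eq_card w ▸ even_sum _ fun a _ => hw a

theorem evenCounts_comp_equiv (e : ι' ≃ ι) {w : ι → α} :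
    EvenCounts (w ∘ e) ↔ EvenCounts w := by
  refine forall_congr' fun a => ?_
  rw [← Fintype.card_subtype, ← Fintype.card_subtype]
  exact Iff.of_eq (congrArg Even (Fintype.card_congr (e.subtypeEquiv fun _ => Iff.rfl)))

theorem card_filter_uncurry_eq_sum {κ : Type*} [Fintype κ] (g : ι → κ → α) (a : α) :
    #{p : ι × κ | g p.1 p.2 = a} = ∑ i, #{k | g i k = a} := by
  simp only [card_filter, Fintype.sum_prod_type]

variable {m : ℕ}

theorem EvenCounts.exists_ne_zero_eq {w : Fin (m + 1) → α} (hw : EvenCounts w) :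
    ∃ j ≠ 0, w j = w 0 := by
  have hpos : 0 < #{i | w i = w 0} := card_pos.2 ⟨0, by simp⟩
  have htwo : 1 < #{i | w i = w 0} := by obtain ⟨k, hk⟩ := hw (w 0); omega
  obtain ⟨j, hj, hj0⟩ := exists_mem_ne htwo 0
  exact ⟨j, hj0, (mem_filter.1 hj).2⟩

theorem EvenCounts.tail_tail {w : Fin (m + 2) → α} (hw : EvenCounts w) (h01 : w 0 = w 1) :
    EvenCounts fun k : Fin m => w k.succ.succ := by
  intro a
  have := hw a
  rw [Fin.card_filter_univ_succ', Fin.card_filter_univ_succ'] at this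
  simp only [Fin.succ_zero_eq_one, ← h01] at this
  split_ifs at this <;> simpa [← add_assoc, Nat.even_add] using this

theorem card_evenCounts_succ_succ_le [Fintype α] :
    #{w : Fin (m + 2) → α | EvenCounts w} ≤
      (m + 2) * Fintype.card α * #{v : Fin m → α | EvenCounts v} := by
  have := fun w : {w : Fin (m + 2) → α // EvenCounts w} => w.2.exists_ne_zero_eq
  choose j hj0 hjw using this
  let moved (w : {w : Fin (m + 2) → α // EvenCounts w}) := w.1 ∘ Equiv.swap 1 (j w)
  have moved_zero w : moved w 0 = w.1 0 := by
    simp [moved, Equiv.swap_apply_of_ne_of_ne (Fin.zero_ne_one) (hj0 w).symm]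
  have moved_one w : moved w 1 = w.1 0 := by simp [moved, hjw]
  have moved_even w : EvenCounts (moved w) := (evenCounts_comp_equiv _).2 w.2
  let code (w : {w : Fin (m + 2) → α // EvenCounts w}) :
      Fin (m + 2) × α × {v : Fin m → α // EvenCounts v} :=
    (j w, w.1 0, ⟨fun k => moved w k.succ.succ,
      (moved_even w).tail_tail ((moved_zero w).trans (moved_one w).symm)⟩)
  have code_injective : Function.Injective code := by
    intro w w' h
    simp only [code, Prod.mk.injEq, Subtype.mk.injEq] at h
    obtain ⟨hj, h0, htail⟩ := h
    have hmoved : moved w = moved w' := by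
      funext k
      refine Fin.cases ?_ (Fin.cases ?_ fun k => congrFun htail k) k
      · rw [moved_zero, moved_zero, h0]
      · rw [Fin.succ_zero_eq_one, moved_one, moved_one, h0]
    refine Subtype.ext (funext fun i => ?_)
    simpa [moved, hj, Equiv.swap_apply_self] using congrFun hmoved (Equiv.swap 1 (j w) i)
  simpa [Fintype.card_subtype, mul_assoc] using Fintype.card_le_of_injective code code_injective

theorem card_evenCounts_fin_le [Fintype α] :
    ∀ m, #{w : Fin m → α | EvenCounts w} ≤ (m * Fintype.card α) ^ (m / 2)
  | 0 => (card_filter_le _ _).trans (by simp)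
  | 1 => by
    have h (w : Fin 1 → α) : ¬EvenCounts w := fun hw =>
      Nat.not_even_one (by simpa using hw.even_card)
    simp [h]
  | m + 2 => by
    calc #{w : Fin (m + 2) → α | EvenCounts w}
        ≤ (m + 2) * Fintype.card α * (m * Fintype.card α) ^ (m / 2) :=
          card_evenCounts_succ_succ_le.trans (Nat.mul_le_mul_left _ (card_evenCounts_fin_le m))
      _ ≤ ((m + 2) * Fintype.card α) * ((m + 2) * Fintype.card α) ^ (m / 2) := by gcongr; omega
      _ = ((m + 2) * Fintype.card α) ^ ((m + 2) / 2) := by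
          rw [← pow_succ', Nat.add_div_right _ two_pos]

theorem card_evenCounts_le [DecidableEq ι] [Fintype α] :
    #{w : ι → α | EvenCounts w} ≤
      (Fintype.card ι * Fintype.card α) ^ (Fintype.card ι / 2) := by
  let e := Fintype.equivFin ι
  calc #{w : ι → α | EvenCounts w} = #{w : Fin (Fintype.card ι) → α | EvenCounts w} := by
        refine card_equiv (e.arrowCongr (Equiv.refl α)) fun w => ?_
        simp only [mem_filter, mem_univ, true_and]
        exact (evenCounts_comp_equiv e.symm).symm
    _ ≤ _ := card_evenCounts_fin_le _

end EvenCounts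

section Hypergraph

variable {κ V : Type*} [Fintype κ] [DecidableEq κ] [Fintype V] [DecidableEq V]

def degree (α : (κ → V) → ℕ) (v : V) : ℕ :=
  ∑ t, α t * #{a | t a = v}

theorem sum_degree (α : (κ → V) → ℕ) :
    ∑ v, degree α v = Fintype.card κ * ∑ t, α t := by
  simp only [degree]
  rw [sum_comm, mul_sum]
  exact sum_congr rfl fun t _ => by rw [← mul_sum, sum_card_filter_eq_card, mul_comm]

def EvenDegrees (s : Finset (κ → V)) : Prop :=
  ∀ v, Even (∑ t ∈ s, #{a | t a = v})

instance : DecidablePred (EvenDegrees : Finset (κ → V) → Prop) :=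
  fun _ => inferInstanceAs (Decidable (∀ _, _))

variable (κ V) in
def evenSimpleHypergraphs (f : ℕ) : Finset (Finset (κ → V)) :=
  {s | #s = f ∧ EvenDegrees s}

theorem factorial_mul_card_evenSimpleHypergraphs_le (f : ℕ) :
    f ! * #(evenSimpleHypergraphs κ V f) ≤
      (f * Fintype.card κ * Fintype.card V) ^ (f * Fintype.card κ / 2) := by
  set Γ := evenSimpleHypergraphs κ V f
  let enum (s : Γ) : Fin f ≃ s.1 := (equivFinOfCardEq (mem_filter.1 s.2).2.1).symm
  let word (p : Γ × Equiv.Perm (Fin f)) : Fin f × κ → V := fun q => (enum p.1 (p.2 q.1)).1 q.2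
  have range_enum (s : Γ) (σ : Equiv.Perm (Fin f)) :
      Set.range (fun k => (enum s (σ k)).1) = s.1 :=
    ((σ.trans (enum s)).surjective.range_comp Subtype.val).trans Subtype.range_coe
  have word_even p : EvenCounts (word p) := by
    intro v
    have hdeg : #{q | word p q = v} = ∑ t ∈ p.1.1, #{a | t a = v} :=
      calc #{q | word p q = v} = ∑ k, #{a | (enum p.1 (p.2 k)).1 a = v} :=
            card_filter_uncurry_eq_sum (fun k a => (enum p.1 (p.2 k)).1 a) v
        _ = ∑ t : p.1.1, #{a | t.1 a = v} :=
            Equiv.sum_comp (p.2.trans (enum p.1)) fun t : p.1.1 => #{a | t.1 a = v}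
        _ = ∑ t ∈ p.1.1, #{a | t a = v} := sum_coe_sort p.1.1 fun t => #{a | t a = v}
    exact hdeg ▸ (mem_filter.1 p.1.2).2.2 v
  have word_injective : Function.Injective word := by
    rintro ⟨s, σ⟩ ⟨s', σ'⟩ h
    have hk k : (enum s (σ k)).1 = (enum s' (σ' k)).1 := funext fun a => congrFun h (k, a)
    obtain rfl : s = s' := Subtype.ext <| coe_injective <| by
      rw [← range_enum s σ, ← range_enum s' σ']
      exact congrArg Set.range (funext hk)
    have : σ = σ' := Equiv.ext fun k => (enum s).injective (Subtype.ext (hk k))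
    rw [this]
  calc f ! * #Γ = Fintype.card (Γ × Equiv.Perm (Fin f)) := by
        simp [Fintype.card_perm, mul_comm]
    _ ≤ Fintype.card {w : Fin f × κ → V // EvenCounts w} :=
        Fintype.card_le_of_injective (fun p => ⟨word p, word_even p⟩)
          fun p p' h => word_injective (congrArg Subtype.val h)
    _ = #{w : Fin f × κ → V | EvenCounts w} := Fintype.card_subtype _
    _ ≤ _ := by simpa using card_evenCounts_le (ι := Fin f × κ) (α := V)

end Hypergraph

section Parity

variable {ι : Type*} [Fintype ι]

def oddSupport (α : ι → ℕ) : Finset ι :=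
  {t | Odd (α t)}

def halfMultiset (α : ι → ℕ) : Multiset ι :=
  ∑ t, (α t / 2) • {t}

theorem count_halfMultiset [DecidableEq ι] (α : ι → ℕ) (t : ι) :
    (halfMultiset α).count t = α t / 2 := by
  simp [halfMultiset, Multiset.count_sum', Multiset.count_singleton]

theorem card_halfMultiset (α : ι → ℕ) :
    Multiset.card (halfMultiset α) = ∑ t, α t / 2 := by
  simp [halfMultiset]

theorem sum_eq_card_oddSupport_add (α : ι → ℕ) :
    ∑ t, α t = #(oddSupport α) + 2 * ∑ t, α t / 2 := by
  rw [oddSupport, card_filter, mul_sum, ← sum_add_distrib]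
  refine sum_congr rfl fun t _ => ?_
  split_ifs with h
  · obtain ⟨k, hk⟩ := h; omega
  · obtain ⟨k, hk⟩ := Nat.not_odd_iff_even.1 h; omega

theorem oddSupport_halfMultiset_injective [DecidableEq ι] :
    Function.Injective fun α : ι → ℕ => (oddSupport α, halfMultiset α) := by
  intro α β h
  simp only [Prod.mk.injEq] at h
  funext t
  have hodd : Odd (α t) ↔ Odd (β t) := by simpa [oddSupport] using congrArg (t ∈ ·) h.1
  have hhalf : α t / 2 = β t / 2 := by rw [← count_halfMultiset, h.2, count_halfMultiset]
  rw [Nat.odd_iff, Nat.odd_iff] at hodd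
  omega

end Parity

theorem card_sym_le_pow (α : Type*) [Fintype α] [DecidableEq α] (k : ℕ) :
    Fintype.card (Sym α k) ≤ Fintype.card α ^ k := by
  have hsurj : Function.Surjective (Sym.ofVector : List.Vector α k → Sym α k) := by
    rintro ⟨m, hm⟩
    induction m using Quotient.inductionOn with
    | h l => exact ⟨⟨l, hm⟩, rfl⟩
  simpa using Fintype.card_le_of_surjective _ hsurj

theorem pow_self_le_three_pow_mul_factorial (f : ℕ) : f ^ f ≤ 3 ^ f * f ! := by
  have h := Real.pow_div_factorial_le_exp (f : ℝ) (Nat.cast_nonneg f) f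
  rw [div_le_iff₀ (by positivity), ← Real.exp_one_pow] at h
  have h3 : Real.exp 1 ^ f ≤ 3 ^ f :=
    pow_le_pow_left₀ (Real.exp_pos 1).le Real.exp_one_lt_three.le f
  exact_mod_cast h.trans (mul_le_mul_of_nonneg_right h3 (by positivity))

theorem le_of_factorial_mul_le {D N f e G : ℕ} (hD : 2 ≤ D) (hN : 0 < N) (hfe : f ≤ e)
    (he : 0 < e) (hG : f ! * G ≤ (f * D * N) ^ (f * D / 2)) :
    G * N ^ (D * ((e - f) / 2)) ≤ 3 ^ e * (D * N) ^ (D * e / 2) * e ^ ((D - 2) * e / 2) := by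
  obtain ⟨d, rfl⟩ : ∃ d, D = d + 2 := ⟨D - 2, by omega⟩
  set b := (e - f) / 2
  have hsplit : f * (d + 2) / 2 = f + d * f / 2 := by
    rw [show f * (d + 2) = d * f + 2 * f by ring]; omega
  have hde : d * f / 2 ≤ d * e / 2 := Nat.div_le_div_right (Nat.mul_le_mul_left d hfe)
  have hDN : f + d * f / 2 + (d + 2) * b ≤ (d + 2) * e / 2 := by
    have hb : 2 * ((d + 2) * b) ≤ (d + 2) * e - (d + 2) * f := by
      rw [← Nat.mul_sub, mul_left_comm]; exact Nat.mul_le_mul_left _ (Nat.mul_div_le _ 2)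
    have : (d + 2) * f ≤ (d + 2) * e := Nat.mul_le_mul_left _ hfe
    rw [show (d + 2) * f = d * f + 2 * f by ring] at hb this; omega
  rw [Nat.add_sub_cancel]
  refine Nat.le_of_mul_le_mul_left ?_ f.factorial_pos
  calc f ! * (G * N ^ ((d + 2) * b))
      = f ! * G * N ^ ((d + 2) * b) := by ring
    _ ≤ (f * (d + 2) * N) ^ (f + d * f / 2) * N ^ ((d + 2) * b) := by rw [← hsplit]; gcongr
    _ = f ^ f * f ^ (d * f / 2) * ((d + 2) * N) ^ (f + d * f / 2) * N ^ ((d + 2) * b) := by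
        rw [mul_assoc f, mul_pow, pow_add f]
    _ ≤ (3 ^ f * f !) * e ^ (d * e / 2) * ((d + 2) * N) ^ (f + d * f / 2) *
          ((d + 2) * N) ^ ((d + 2) * b) := by
        gcongr ?_ * ?_ * _ * ?_
        · exact pow_self_le_three_pow_mul_factorial f
        · exact (Nat.pow_le_pow_left hfe _).trans (Nat.pow_le_pow_right he hde)
        · exact Nat.pow_le_pow_left (Nat.le_mul_of_pos_left N (by omega)) _
    _ = f ! * (3 ^ f * ((d + 2) * N) ^ (f + d * f / 2 + (d + 2) * b) * e ^ (d * e / 2)) := by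
        ring
    _ ≤ f ! * (3 ^ e * ((d + 2) * N) ^ ((d + 2) * e / 2) * e ^ (d * e / 2)) := by
        gcongr
        · norm_num
        · have : 0 < (d + 2) * N := by positivity
          omega

section Decomposition

variable {κ V : Type*} [Fintype κ] [DecidableEq κ] [Fintype V] [DecidableEq V]

theorem even_degree_iff (α : (κ → V) → ℕ) (v : V) :
    Even (degree α v) ↔ Even (∑ t ∈ oddSupport α, #{a | t a = v}) := by
  simp only [degree, ← ZMod.natCast_eq_zero_iff_even, Nat.cast_sum, Nat.cast_mul, oddSupport,
    sum_filter]
  refine Eq.congr_left (sum_congr rfl fun t _ => ?_)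
  split_ifs with h
  · rw [ZMod.natCast_eq_one_iff_odd.2 h, one_mul]
  · rw [ZMod.natCast_eq_zero_iff_even.2 (Nat.not_odd_iff_even.1 h), zero_mul, Nat.cast_zero]

variable (κ V) in
def evenDegreeHypergraphs (e : ℕ) : Set ((κ → V) → ℕ) :=
  {α | ∑ t, α t = e ∧ ∀ v, Even (degree α v)}

variable (κ V) in
def decompositions (e : ℕ) : Finset (Finset (κ → V) × Multiset (κ → V)) :=
  (range (e + 1)).biUnion fun f =>
    evenSimpleHypergraphs κ V f ×ˢ
      univ.image fun m : Sym (κ → V) ((e - f) / 2) => (m : Multiset (κ → V))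

theorem evenDegreeHypergraphs_subset_preimage (e : ℕ) :
    evenDegreeHypergraphs κ V e ⊆
      (fun α => (oddSupport α, halfMultiset α)) ⁻¹' decompositions κ V e := by
  rintro α ⟨hsum, hdeg⟩
  have hsplit := sum_eq_card_oddSupport_add α
  simp only [Set.mem_preimage, mem_coe, decompositions, mem_biUnion, mem_range, mem_product,
    mem_image, mem_univ, true_and, evenSimpleHypergraphs, mem_filter]
  refine ⟨#(oddSupport α), by omega, ⟨rfl, fun v => (even_degree_iff α v).1 (hdeg v)⟩,
    ⟨halfMultiset α, ?_⟩, rfl⟩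
  rw [card_halfMultiset]
  omega

theorem card_decompositions_le (e : ℕ) :
    #(decompositions κ V e) ≤
      ∑ f ∈ range (e + 1), #(evenSimpleHypergraphs κ V f) *
        Fintype.card V ^ (Fintype.card κ * ((e - f) / 2)) := by
  refine card_biUnion_le.trans (sum_le_sum fun f _ => ?_)
  rw [card_product, pow_mul, ← Fintype.card_fun]
  exact Nat.mul_le_mul_left _ (card_image_le.trans (card_sym_le_pow _ _))

theorem finite_evenDegreeHypergraphs (e : ℕ) :
    (evenDegreeHypergraphs κ V e).Finite :=
  ((decompositions κ V e).finite_toSet.preimage oddSupport_halfMultiset_injective.injOn).subset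
    (evenDegreeHypergraphs_subset_preimage e)

theorem ncard_evenDegreeHypergraphs_le (e : ℕ) :
    (evenDegreeHypergraphs κ V e).ncard ≤
      ∑ f ∈ range (e + 1), #(evenSimpleHypergraphs κ V f) *
        Fintype.card V ^ (Fintype.card κ * ((e - f) / 2)) := by
  refine le_trans ?_ (card_decompositions_le e)
  rw [← Set.ncard_coe_finset]
  exact Set.ncard_le_ncard_of_injOn _ (evenDegreeHypergraphs_subset_preimage e)
    oddSupport_halfMultiset_injective.injOn

theorem ncard_evenDegreeHypergraphs_le_pow {e : ℕ} (he : 0 < e) (hκ : 2 ≤ Fintype.card κ)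
    (hV : 0 < Fintype.card V) :
    (evenDegreeHypergraphs κ V e).ncard ≤
      (6 * Fintype.card κ * Fintype.card V) ^ (Fintype.card κ * e / 2) *
        e ^ ((Fintype.card κ - 2) * e / 2) := by
  set D := Fintype.card κ
  set n := Fintype.card V
  have hterm f (hf : f ∈ range (e + 1)) :
      #(evenSimpleHypergraphs κ V f) * n ^ (D * ((e - f) / 2)) ≤
        3 ^ e * (D * n) ^ (D * e / 2) * e ^ ((D - 2) * e / 2) :=
    le_of_factorial_mul_le hκ hV (Nat.lt_succ_iff.1 (mem_range.1 hf)) he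
      (factorial_mul_card_evenSimpleHypergraphs_le f)
  have hconst : (e + 1) * 3 ^ e ≤ 6 ^ (D * e / 2) :=
    calc (e + 1) * 3 ^ e ≤ 2 ^ e * 3 ^ e := Nat.mul_le_mul_right _ Nat.lt_two_pow_self
      _ = 6 ^ e := by rw [← mul_pow]; norm_num
      _ ≤ 6 ^ (D * e / 2) :=
          Nat.pow_le_pow_right (by norm_num) (by have := Nat.mul_le_mul_right e hκ; omega)
  calc (evenDegreeHypergraphs κ V e).ncard
      ≤ ∑ f ∈ range (e + 1), #(evenSimpleHypergraphs κ V f) * n ^ (D * ((e - f) / 2)) :=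
        ncard_evenDegreeHypergraphs_le e
    _ ≤ (e + 1) * 3 ^ e * ((D * n) ^ (D * e / 2) * e ^ ((D - 2) * e / 2)) := by
        simpa [mul_assoc] using sum_le_sum hterm
    _ ≤ 6 ^ (D * e / 2) * ((D * n) ^ (D * e / 2) * e ^ ((D - 2) * e / 2)) :=
        Nat.mul_le_mul_right _ hconst
    _ = (6 * D * n) ^ (D * e / 2) * e ^ ((D - 2) * e / 2) := by rw [mul_assoc 6, mul_pow]; ring

end Decomposition

/-- **Counting directed `D`-uniform multihypergraphs with all degrees even.**
There is an absolute constant `C > 0` such that for all `D > 2` and `e, n ≥ 1` with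
`D·e ≤ 2n`: if `D·e` is even, the number of functions `α : {1,…,n}^D → ℕ` with total edge
count `e` and all vertex degrees even is at most `(C·D·n)^(D·e/2) · e^((D/2-1)·e)`; if
`D·e` is odd there are no such functions. -/
theorem count_even_degree_hypergraphs :
    ∃ C : ℕ, 0 < C ∧
      ∀ D e n : ℕ, 2 < D → 0 < e → 0 < n → D * e ≤ 2 * n →
        ((Even (D * e) →
            {α : (Fin D → Fin n) → ℕ |
                (∑ t : Fin D → Fin n, α t) = e ∧
                ∀ i : Fin n, Even (∑ t : Fin D → Fin n,
                  α t * (Finset.univ.filter fun a : Fin D => t a = i).card)}.Finite ∧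
            {α : (Fin D → Fin n) → ℕ |
                (∑ t : Fin D → Fin n, α t) = e ∧
                ∀ i : Fin n, Even (∑ t : Fin D → Fin n,
                  α t * (Finset.univ.filter fun a : Fin D => t a = i).card)}.ncard ≤
              (C * D * n) ^ (D * e / 2) * e ^ ((D - 2) * e / 2)) ∧
         (¬ Even (D * e) →
            {α : (Fin D → Fin n) → ℕ |
                (∑ t : Fin D → Fin n, α t) = e ∧
                ∀ i : Fin n, Even (∑ t : Fin D → Fin n,
                  α t * (Finset.univ.filter fun a : Fin D => t a = i).card)} = ∅)) := by
  refine ⟨6, by norm_num, fun D e n hD he hn _ => ⟨fun _ => ?_, fun hodd => ?_⟩⟩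
  · change (evenDegreeHypergraphs (Fin D) (Fin n) e).Finite ∧
      (evenDegreeHypergraphs (Fin D) (Fin n) e).ncard ≤ _
    refine ⟨finite_evenDegreeHypergraphs e, ?_⟩
    simpa using ncard_evenDegreeHypergraphs_le_pow (κ := Fin D) (V := Fin n) he
      (by simpa using hD.le) (by simpa using hn)
  · change evenDegreeHypergraphs (Fin D) (Fin n) e = ∅
    refine Set.eq_empty_of_forall_notMem fun α ⟨hsum, hdeg⟩ => hodd ?_
    have h : Even (∑ v, degree α v) := even_sum _ fun v _ => hdeg v
    rwa [sum_degree, Fintype.card_fin, hsum] at h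
end
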